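/- arXiv:2508.04392 — 8 statements merged into one kernel-verified Lean document; each statement's English description precedes it below -/
import Mathlib

section
/- Assume δ^μ < h. Then the piecewise function φ is twice continuously differentiable on the interval [−h, 1] and is strictly increasing on [−h, 1]. -/
noncomputable section

/-- The smeared-out Heaviside shape function `S(z) = z - sin(2πz)/(2π)`. -/
def Sfun (z : ℝ) : ℝ := z - Real.sin (2 * Real.pi * z) / (2 * Real.pi)

/-- The quintic shape function `P(z) = z³(6z² - 15z + 10)`. -/
def Pfun (z : ℝ) : ℝ := z ^ 3 * (6 * z ^ 2 - 15 * z + 10)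

open Set Filter Real

namespace PhiAux

lemma hasDerivAt_Sfun (z : ℝ) :
    HasDerivAt Sfun (1 - Real.cos (2 * Real.pi * z)) z := by
  have hπ : (2 * Real.pi) ≠ 0 := by positivity
  have h1 : HasDerivAt (fun z : ℝ => 2 * Real.pi * z) (2 * Real.pi) z := by
    simpa using (hasDerivAt_id z).const_mul (2 * Real.pi)
  have h2 : HasDerivAt (fun z : ℝ => Real.sin (2 * Real.pi * z))
      (Real.cos (2 * Real.pi * z) * (2 * Real.pi)) z :=
    (Real.hasDerivAt_sin _).comp z h1
  have h3 := (hasDerivAt_id z).sub (h2.div_const (2 * Real.pi))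
  exact h3.congr_deriv (by field_simp)

lemma hasDerivAt_S1 (z : ℝ) :
    HasDerivAt (fun z : ℝ => 1 - Real.cos (2 * Real.pi * z))
      (2 * Real.pi * Real.sin (2 * Real.pi * z)) z := by
  have h1 : HasDerivAt (fun z : ℝ => 2 * Real.pi * z) (2 * Real.pi) z := by
    simpa using (hasDerivAt_id z).const_mul (2 * Real.pi)
  have h2 : HasDerivAt (fun z : ℝ => Real.cos (2 * Real.pi * z))
      (-Real.sin (2 * Real.pi * z) * (2 * Real.pi)) z :=
    (Real.hasDerivAt_cos _).comp z h1
  have h3 := (hasDerivAt_const z (1 : ℝ)).sub h2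
  exact h3.congr_deriv (by ring)

lemma hasDerivAt_Pfun (z : ℝ) :
    HasDerivAt Pfun (30 * z ^ 2 * (z - 1) ^ 2) z := by
  have A : HasDerivAt (fun x : ℝ => x ^ 3) (3 * z ^ 2) z := by
    simpa using hasDerivAt_pow 3 z
  have B : HasDerivAt (fun x : ℝ => 6 * x ^ 2 - 15 * x + 10) (12 * z - 15) z := by
    have b1 : HasDerivAt (fun x : ℝ => x ^ 2) (2 * z) z := by
      simpa using hasDerivAt_pow 2 z
    have := ((b1.const_mul 6).sub ((hasDerivAt_id z).const_mul 15)).add_const 10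
    exact this.congr_deriv (by ring)
  have C := A.mul B
  exact C.congr_deriv (by ring)

lemma hasDerivAt_P1 (z : ℝ) :
    HasDerivAt (fun z : ℝ => 30 * z ^ 2 * (z - 1) ^ 2)
      (60 * z * (z - 1) * (2 * z - 1)) z := by
  have b1 : HasDerivAt (fun x : ℝ => 30 * x ^ 2) (30 * (2 * z)) z := by
    have := hasDerivAt_pow 2 z
    simpa using this.const_mul 30
  have b2 : HasDerivAt (fun x : ℝ => (x - 1) ^ 2) (2 * (z - 1)) z := by
    have := ((hasDerivAt_id z).sub_const 1).pow 2
    exact this.congr_deriv (by simp)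
  have C := b1.mul b2
  exact C.congr_deriv (by ring)

/-- Glue two one-sided descriptions into a genuine two-sided derivative. -/
lemma glue_hasDerivAt {f F G : ℝ → ℝ} {a x b d : ℝ} (hax : a < x) (hxb : x < b)
    (hF : ∀ y ∈ Icc a x, f y = F y) (hG : ∀ y ∈ Icc x b, f y = G y)
    (hF' : HasDerivAt F d x) (hG' : HasDerivAt G d x) : HasDerivAt f d x := by
  have m1 : Icc a x ∈ nhdsWithin x (Iic x) := Icc_mem_nhdsLE hax
  have m2 : Icc x b ∈ nhdsWithin x (Ici x) := Icc_mem_nhdsGE hxb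
  have e1 : f =ᶠ[nhdsWithin x (Iic x)] F := eventuallyEq_of_mem m1 hF
  have e2 : f =ᶠ[nhdsWithin x (Ici x)] G := eventuallyEq_of_mem m2 hG
  have d1 : HasDerivWithinAt f d (Iic x) x :=
    (hF'.hasDerivWithinAt).congr_of_eventuallyEq e1 (hF x ⟨hax.le, le_rfl⟩)
  have d2 : HasDerivWithinAt f d (Ici x) x :=
    (hG'.hasDerivWithinAt).congr_of_eventuallyEq e2 (hG x ⟨le_rfl, hxb.le⟩)
  have := d1.union d2
  rw [Iic_union_Ici] at this
  exact hasDerivWithinAt_univ.mp this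

lemma glue_continuousAt {f F G : ℝ → ℝ} {a x b : ℝ} (hax : a < x) (hxb : x < b)
    (hF : ∀ y ∈ Icc a x, f y = F y) (hG : ∀ y ∈ Icc x b, f y = G y)
    (hF' : ContinuousAt F x) (hG' : ContinuousAt G x) : ContinuousAt f x := by
  have c1 : ContinuousWithinAt f (Icc a x) x :=
    (hF'.continuousWithinAt).congr hF (hF x ⟨hax.le, le_rfl⟩)
  have c2 : ContinuousWithinAt f (Icc x b) x :=
    (hG'.continuousWithinAt).congr hG (hG x ⟨le_rfl, hxb.le⟩)
  have c1' : ContinuousWithinAt f (Iic x) x :=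
    c1.mono_of_mem_nhdsWithin (Icc_mem_nhdsLE hax)
  have c2' : ContinuousWithinAt f (Ici x) x :=
    c2.mono_of_mem_nhdsWithin (Icc_mem_nhdsGE hxb)
  have := c1'.union c2'
  rw [Iic_union_Ici] at this
  exact (continuousWithinAt_univ f x).mp this

lemma exists_piece {h : ℝ} (hh : 0 < h) (t : ℝ) :
    ∃ j : ℤ, (j : ℝ) * h ≤ t ∧ t < ((j : ℝ) + 1) * h := by
  refine ⟨⌊t / h⌋, ?_, ?_⟩
  · have h1 : (⌊t / h⌋ : ℝ) ≤ t / h := Int.floor_le _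
    have := mul_le_mul_of_nonneg_right h1 hh.le
    rwa [div_mul_cancel₀ t hh.ne'] at this
  · have h1 : t / h < (⌊t / h⌋ : ℝ) + 1 := Int.lt_floor_add_one _
    exact (div_lt_iff₀ hh).1 h1

/-- The core gluing lemma: a function given by smooth formulas on the pieces
`[jh, jh+δ]` and `[jh+δ, (j+1)h]`, with matching derivatives at the junctions,
is differentiable with the expected derivative on each closed piece. -/
lemma piecewise_hasDerivAt {h δ : ℝ} (hδ : 0 < δ) (hδh : δ < h)
    {ξ : ℝ → ℝ} {A B A' B' : ℤ → ℝ → ℝ}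
    (hA : ∀ j : ℤ, ∀ t ∈ Icc ((j : ℝ) * h) ((j : ℝ) * h + δ), ξ t = A j t)
    (hB : ∀ j : ℤ, ∀ t ∈ Icc ((j : ℝ) * h + δ) (((j : ℝ) + 1) * h), ξ t = B j t)
    (hA' : ∀ (j : ℤ) (t : ℝ), HasDerivAt (A j) (A' j t) t)
    (hB' : ∀ (j : ℤ) (t : ℝ), HasDerivAt (B j) (B' j t) t)
    (hM1 : ∀ j : ℤ, A' j ((j : ℝ) * h) = B' (j - 1) ((j : ℝ) * h))
    (hM2 : ∀ j : ℤ, A' j ((j : ℝ) * h + δ) = B' j ((j : ℝ) * h + δ)) :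
    (∀ j : ℤ, ∀ t ∈ Icc ((j : ℝ) * h) ((j : ℝ) * h + δ), HasDerivAt ξ (A' j t) t) ∧
    (∀ j : ℤ, ∀ t ∈ Icc ((j : ℝ) * h + δ) (((j : ℝ) + 1) * h), HasDerivAt ξ (B' j t) t) := by
  have hBm : ∀ j : ℤ, ∀ t ∈ Icc (((j : ℝ) - 1) * h + δ) ((j : ℝ) * h), ξ t = B (j - 1) t := by
    intro j t ht
    obtain ⟨h1, h2⟩ := ht
    refine hB (j - 1) t ⟨?_, ?_⟩
    · push_cast
      exact h1
    · push_cast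
      rw [show ((j : ℝ) - 1 + 1) * h = (j : ℝ) * h from by ring]
      exact h2
  have hAp : ∀ j : ℤ, ∀ t ∈ Icc (((j : ℝ) + 1) * h) (((j : ℝ) + 1) * h + δ),
      ξ t = A (j + 1) t := by
    intro j t ht
    obtain ⟨h1, h2⟩ := ht
    refine hA (j + 1) t ⟨?_, ?_⟩ <;> push_cast
    · exact h1
    · exact h2
  have hM1p : ∀ j : ℤ, A' (j + 1) (((j : ℝ) + 1) * h) = B' j (((j : ℝ) + 1) * h) := by
    intro j
    have := hM1 (j + 1)
    simp only [add_sub_cancel_right] at this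
    push_cast at this
    exact this
  have hone : ∀ j : ℤ, ((j : ℝ) - 1) * h + δ < (j : ℝ) * h := by
    intro j
    rw [show ((j : ℝ) - 1) * h = (j : ℝ) * h - h from by ring]
    linarith
  have htwo : ∀ j : ℤ, (j : ℝ) * h + δ < ((j : ℝ) + 1) * h := by
    intro j
    rw [show ((j : ℝ) + 1) * h = (j : ℝ) * h + h from by ring]
    linarith
  constructor
  · intro j t ht
    obtain ⟨h1, h2⟩ := ht
    rcases eq_or_lt_of_le h1 with heq | h1'
    · subst heq
      refine glue_hasDerivAt (hone j) (by linarith) (hBm j) (hA j) ?_ (hA' j _)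
      rw [hM1 j]
      exact hB' (j - 1) _
    · rcases eq_or_lt_of_le h2 with heq | h2'
      · subst heq
        refine glue_hasDerivAt h1' (htwo j) (hA j) (hB j) (hA' j _) ?_
        rw [hM2 j]
        exact hB' j _
      · exact glue_hasDerivAt h1' h2'
          (fun y hy => hA j y ⟨hy.1, hy.2.trans h2'.le⟩)
          (fun y hy => hA j y ⟨h1.trans hy.1, hy.2⟩)
          (hA' j t) (hA' j t)
  · intro j t ht
    obtain ⟨h1, h2⟩ := ht
    rcases eq_or_lt_of_le h1 with heq | h1'
    · subst heq
      refine glue_hasDerivAt (by linarith) (htwo j) (hA j) (hB j) ?_ (hB' j _)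
      rw [← hM2 j]
      exact hA' j _
    · rcases eq_or_lt_of_le h2 with heq | h2'
      · subst heq
        refine glue_hasDerivAt h1' (by linarith) (hB j) (hAp j) (hB' j _) ?_
        rw [← hM1p j]
        exact hA' (j + 1) _
      · exact glue_hasDerivAt h1' h2'
          (fun y hy => hB j y ⟨hy.1, hy.2.trans h2'.le⟩)
          (fun y hy => hB j y ⟨h1.trans hy.1, hy.2⟩)
          (hB' j t) (hB' j t)

/-- Continuity of a piecewise-defined function whose pieces are continuous. -/
lemma piecewise_continuous {h δ : ℝ} (hδ : 0 < δ) (hδh : δ < h)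
    {ξ : ℝ → ℝ} {A B : ℤ → ℝ → ℝ}
    (hA : ∀ j : ℤ, ∀ t ∈ Icc ((j : ℝ) * h) ((j : ℝ) * h + δ), ξ t = A j t)
    (hB : ∀ j : ℤ, ∀ t ∈ Icc ((j : ℝ) * h + δ) (((j : ℝ) + 1) * h), ξ t = B j t)
    (hAc : ∀ j : ℤ, Continuous (A j)) (hBc : ∀ j : ℤ, Continuous (B j)) :
    Continuous ξ := by
  have hBm : ∀ j : ℤ, ∀ t ∈ Icc (((j : ℝ) - 1) * h + δ) ((j : ℝ) * h), ξ t = B (j - 1) t := by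
    intro j t ht
    obtain ⟨h1, h2⟩ := ht
    refine hB (j - 1) t ⟨?_, ?_⟩
    · push_cast
      exact h1
    · push_cast
      rw [show ((j : ℝ) - 1 + 1) * h = (j : ℝ) * h from by ring]
      exact h2
  have hone : ∀ j : ℤ, ((j : ℝ) - 1) * h + δ < (j : ℝ) * h := by
    intro j
    rw [show ((j : ℝ) - 1) * h = (j : ℝ) * h - h from by ring]
    linarith
  have htwo : ∀ j : ℤ, (j : ℝ) * h + δ < ((j : ℝ) + 1) * h := by
    intro j
    rw [show ((j : ℝ) + 1) * h = (j : ℝ) * h + h from by ring]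
    linarith
  rw [continuous_iff_continuousAt]
  intro t
  obtain ⟨j, hj1, hj2⟩ := exists_piece (hδ.trans hδh) t
  rcases lt_trichotomy t ((j : ℝ) * h + δ) with hc | hc | hc
  · rcases eq_or_lt_of_le hj1 with heq | h1'
    · subst heq
      exact glue_continuousAt (hone j) (by linarith) (hBm j) (hA j)
        ((hBc (j - 1)).continuousAt) ((hAc j).continuousAt)
    · exact glue_continuousAt h1' hc
        (fun y hy => hA j y ⟨hy.1, hy.2.trans hc.le⟩)
        (fun y hy => hA j y ⟨hj1.trans hy.1, hy.2⟩)
        ((hAc j).continuousAt) ((hAc j).continuousAt)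
  · subst hc
    exact glue_continuousAt (by linarith) (htwo j) (hA j) (hB j)
      ((hAc j).continuousAt) ((hBc j).continuousAt)
  · exact glue_continuousAt hc hj2
      (fun y hy => hB j y ⟨hy.1, hy.2.trans hj2.le⟩)
      (fun y hy => hB j y ⟨hc.le.trans hy.1, hy.2⟩)
      ((hBc j).continuousAt) ((hBc j).continuousAt)

end PhiAux

open PhiAux

/-- φ is C² and strictly increasing on [-h, 1]. -/
theorem phi_smooth_strictMono
    (N : ℕ) (hN : 2 ≤ N) (δ : ℝ) (hδ : 0 < δ) (μ : ℝ) (hμ : 0 < μ)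
    (h : ℝ) (hh : h = (N : ℝ) * δ)
    (φ : ℝ → ℝ)
    (hφS : ∀ j : ℤ, ∀ t ∈ Set.Icc ((j : ℝ) * h) ((j : ℝ) * h + δ),
      φ t = (j : ℝ) * h + δ ^ μ * Sfun ((t - (j : ℝ) * h) / δ))
    (hφP : ∀ j : ℤ, ∀ t ∈ Set.Icc ((j : ℝ) * h + δ) (((j : ℝ) + 1) * h),
      φ t = (j : ℝ) * h + δ ^ μ + (h - δ ^ μ) * Pfun ((t - (j : ℝ) * h - δ) / (h - δ)))
    (hlt : δ ^ μ < h) :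
    ContDiffOn ℝ 2 φ (Set.Icc (-h) 1) ∧ StrictMonoOn φ (Set.Icc (-h) 1) := by
  have hπ := Real.pi_pos
  have hN2 : (2 : ℝ) ≤ (N : ℝ) := by exact_mod_cast hN
  have hδh : δ < h := by rw [hh]; nlinarith
  have hh0 : (0 : ℝ) < h := hδ.trans hδh
  have hc0 : (0 : ℝ) < δ ^ μ := Real.rpow_pos_of_pos hδ μ
  have hhc : (0 : ℝ) < h - δ ^ μ := by linarith
  have hhδ : (0 : ℝ) < h - δ := by linarith
  have hhδne : h - δ ≠ 0 := hhδ.ne'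
  -- first derivatives of the two model pieces
  have hAd : ∀ (j : ℤ) (t : ℝ),
      HasDerivAt (fun t => (j : ℝ) * h + δ ^ μ * Sfun ((t - (j : ℝ) * h) / δ))
        (δ ^ μ * ((1 - Real.cos (2 * Real.pi * ((t - (j : ℝ) * h) / δ))) * (1 / δ))) t := by
    intro j t
    have hu : HasDerivAt (fun t : ℝ => (t - (j : ℝ) * h) / δ) (1 / δ) t := by
      simpa using ((hasDerivAt_id t).sub_const ((j : ℝ) * h)).div_const δ
    exact (((hasDerivAt_Sfun _).comp t hu).const_mul _).const_add _
  have hBd : ∀ (j : ℤ) (t : ℝ),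
      HasDerivAt
        (fun t => (j : ℝ) * h + δ ^ μ + (h - δ ^ μ) * Pfun ((t - (j : ℝ) * h - δ) / (h - δ)))
        ((h - δ ^ μ) * ((30 * ((t - (j : ℝ) * h - δ) / (h - δ)) ^ 2 *
          ((t - (j : ℝ) * h - δ) / (h - δ) - 1) ^ 2) * (1 / (h - δ)))) t := by
    intro j t
    have hu : HasDerivAt (fun t : ℝ => (t - (j : ℝ) * h - δ) / (h - δ)) (1 / (h - δ)) t := by
      simpa using (((hasDerivAt_id t).sub_const ((j : ℝ) * h)).sub_const δ).div_const (h - δ)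
    exact (((hasDerivAt_Pfun _).comp t hu).const_mul _).const_add _
  -- matching of first derivatives at junctions (all are 0)
  have hM1 : ∀ j : ℤ,
      δ ^ μ * ((1 - Real.cos (2 * Real.pi * (((j : ℝ) * h - (j : ℝ) * h) / δ))) * (1 / δ)) =
      (h - δ ^ μ) * ((30 * (((j : ℝ) * h - ((j - 1 : ℤ) : ℝ) * h - δ) / (h - δ)) ^ 2 *
        (((j : ℝ) * h - ((j - 1 : ℤ) : ℝ) * h - δ) / (h - δ) - 1) ^ 2) * (1 / (h - δ))) := by
    intro j
    have e1 : ((j : ℝ) * h - (j : ℝ) * h) / δ = 0 := by simp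
    have e2 : ((j : ℝ) * h - ((j - 1 : ℤ) : ℝ) * h - δ) / (h - δ) = 1 := by
      push_cast
      rw [show (j : ℝ) * h - ((j : ℝ) - 1) * h - δ = h - δ from by ring]
      exact div_self hhδne
    rw [e1, e2]
    norm_num
  have hM2 : ∀ j : ℤ,
      δ ^ μ * ((1 - Real.cos (2 * Real.pi * (((j : ℝ) * h + δ - (j : ℝ) * h) / δ))) * (1 / δ)) =
      (h - δ ^ μ) * ((30 * (((j : ℝ) * h + δ - (j : ℝ) * h - δ) / (h - δ)) ^ 2 *
        (((j : ℝ) * h + δ - (j : ℝ) * h - δ) / (h - δ) - 1) ^ 2) * (1 / (h - δ))) := by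
    intro j
    have e1 : ((j : ℝ) * h + δ - (j : ℝ) * h) / δ = 1 := by
      rw [show (j : ℝ) * h + δ - (j : ℝ) * h = δ from by ring]
      exact div_self hδ.ne'
    have e2 : ((j : ℝ) * h + δ - (j : ℝ) * h - δ) / (h - δ) = 0 := by
      rw [show (j : ℝ) * h + δ - (j : ℝ) * h - δ = 0 from by ring, zero_div]
    rw [e1, e2]
    norm_num [Real.cos_two_pi]
  obtain ⟨hd1, hd2⟩ := piecewise_hasDerivAt hδ hδh hφS hφP hAd hBd hM1 hM2
  -- φ is differentiable everywhere
  have hdiff : Differentiable ℝ φ := by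
    intro t
    obtain ⟨j, hj1, hj2⟩ := exists_piece hh0 t
    by_cases hcc : t ≤ (j : ℝ) * h + δ
    · exact (hd1 j t ⟨hj1, hcc⟩).differentiableAt
    · exact (hd2 j t ⟨(not_le.mp hcc).le, hj2.le⟩).differentiableAt
  -- piecewise description of deriv φ
  have hψS : ∀ j : ℤ, ∀ t ∈ Set.Icc ((j : ℝ) * h) ((j : ℝ) * h + δ),
      deriv φ t = δ ^ μ * ((1 - Real.cos (2 * Real.pi * ((t - (j : ℝ) * h) / δ))) * (1 / δ)) :=
    fun j t ht => (hd1 j t ht).deriv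
  have hψP : ∀ j : ℤ, ∀ t ∈ Set.Icc ((j : ℝ) * h + δ) (((j : ℝ) + 1) * h),
      deriv φ t = (h - δ ^ μ) * ((30 * ((t - (j : ℝ) * h - δ) / (h - δ)) ^ 2 *
        ((t - (j : ℝ) * h - δ) / (h - δ) - 1) ^ 2) * (1 / (h - δ))) :=
    fun j t ht => (hd2 j t ht).deriv
  -- second derivatives of the model pieces
  have hAd2 : ∀ (j : ℤ) (t : ℝ),
      HasDerivAt (fun t => δ ^ μ * ((1 - Real.cos (2 * Real.pi * ((t - (j : ℝ) * h) / δ))) * (1 / δ)))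
        (δ ^ μ * ((2 * Real.pi * Real.sin (2 * Real.pi * ((t - (j : ℝ) * h) / δ)) * (1 / δ)) * (1 / δ))) t := by
    intro j t
    have hu : HasDerivAt (fun t : ℝ => (t - (j : ℝ) * h) / δ) (1 / δ) t := by
      simpa using ((hasDerivAt_id t).sub_const ((j : ℝ) * h)).div_const δ
    exact (((hasDerivAt_S1 _).comp t hu).mul_const _).const_mul _
  have hBd2 : ∀ (j : ℤ) (t : ℝ),
      HasDerivAt (fun t => (h - δ ^ μ) * ((30 * ((t - (j : ℝ) * h - δ) / (h - δ)) ^ 2 *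
          ((t - (j : ℝ) * h - δ) / (h - δ) - 1) ^ 2) * (1 / (h - δ))))
        ((h - δ ^ μ) * ((60 * ((t - (j : ℝ) * h - δ) / (h - δ)) *
          ((t - (j : ℝ) * h - δ) / (h - δ) - 1) *
          (2 * ((t - (j : ℝ) * h - δ) / (h - δ)) - 1) * (1 / (h - δ))) * (1 / (h - δ)))) t := by
    intro j t
    have hu : HasDerivAt (fun t : ℝ => (t - (j : ℝ) * h - δ) / (h - δ)) (1 / (h - δ)) t := by
      simpa using (((hasDerivAt_id t).sub_const ((j : ℝ) * h)).sub_const δ).div_const (h - δ)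
    exact (((hasDerivAt_P1 _).comp t hu).mul_const _).const_mul _
  -- matching of second derivatives at junctions (all are 0)
  have hM1' : ∀ j : ℤ,
      δ ^ μ * ((2 * Real.pi * Real.sin (2 * Real.pi * (((j : ℝ) * h - (j : ℝ) * h) / δ)) * (1 / δ)) * (1 / δ)) =
      (h - δ ^ μ) * ((60 * (((j : ℝ) * h - ((j - 1 : ℤ) : ℝ) * h - δ) / (h - δ)) *
        ((((j : ℝ) * h - ((j - 1 : ℤ) : ℝ) * h - δ) / (h - δ)) - 1) *
        (2 * (((j : ℝ) * h - ((j - 1 : ℤ) : ℝ) * h - δ) / (h - δ)) - 1) * (1 / (h - δ))) * (1 / (h - δ))) := by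
    intro j
    have e1 : ((j : ℝ) * h - (j : ℝ) * h) / δ = 0 := by simp
    have e2 : ((j : ℝ) * h - ((j - 1 : ℤ) : ℝ) * h - δ) / (h - δ) = 1 := by
      push_cast
      rw [show (j : ℝ) * h - ((j : ℝ) - 1) * h - δ = h - δ from by ring]
      exact div_self hhδne
    rw [e1, e2]
    norm_num
  have hM2' : ∀ j : ℤ,
      δ ^ μ * ((2 * Real.pi * Real.sin (2 * Real.pi * (((j : ℝ) * h + δ - (j : ℝ) * h) / δ)) * (1 / δ)) * (1 / δ)) =
      (h - δ ^ μ) * ((60 * (((j : ℝ) * h + δ - (j : ℝ) * h - δ) / (h - δ)) *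
        ((((j : ℝ) * h + δ - (j : ℝ) * h - δ) / (h - δ)) - 1) *
        (2 * (((j : ℝ) * h + δ - (j : ℝ) * h - δ) / (h - δ)) - 1) * (1 / (h - δ))) * (1 / (h - δ))) := by
    intro j
    have e1 : ((j : ℝ) * h + δ - (j : ℝ) * h) / δ = 1 := by
      rw [show (j : ℝ) * h + δ - (j : ℝ) * h = δ from by ring]
      exact div_self hδ.ne'
    have e2 : ((j : ℝ) * h + δ - (j : ℝ) * h - δ) / (h - δ) = 0 := by
      rw [show (j : ℝ) * h + δ - (j : ℝ) * h - δ = 0 from by ring, zero_div]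
    rw [e1, e2]
    norm_num [Real.sin_two_pi]
  obtain ⟨he1, he2⟩ := piecewise_hasDerivAt hδ hδh hψS hψP hAd2 hBd2 hM1' hM2'
  have hdiff2 : Differentiable ℝ (deriv φ) := by
    intro t
    obtain ⟨j, hj1, hj2⟩ := exists_piece hh0 t
    by_cases hcc : t ≤ (j : ℝ) * h + δ
    · exact (he1 j t ⟨hj1, hcc⟩).differentiableAt
    · exact (he2 j t ⟨(not_le.mp hcc).le, hj2.le⟩).differentiableAt
  -- piecewise description of the second derivative
  have hξS : ∀ j : ℤ, ∀ t ∈ Set.Icc ((j : ℝ) * h) ((j : ℝ) * h + δ),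
      deriv (deriv φ) t =
        δ ^ μ * ((2 * Real.pi * Real.sin (2 * Real.pi * ((t - (j : ℝ) * h) / δ)) * (1 / δ)) * (1 / δ)) :=
    fun j t ht => (he1 j t ht).deriv
  have hξP : ∀ j : ℤ, ∀ t ∈ Set.Icc ((j : ℝ) * h + δ) (((j : ℝ) + 1) * h),
      deriv (deriv φ) t =
        (h - δ ^ μ) * ((60 * ((t - (j : ℝ) * h - δ) / (h - δ)) *
          ((t - (j : ℝ) * h - δ) / (h - δ) - 1) *
          (2 * ((t - (j : ℝ) * h - δ) / (h - δ)) - 1) * (1 / (h - δ))) * (1 / (h - δ))) :=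
    fun j t ht => (he2 j t ht).deriv
  have hcont2 : Continuous (deriv (deriv φ)) := by
    refine piecewise_continuous hδ hδh hξS hξP ?_ ?_
    · intro j
      have hinner : Continuous (fun t : ℝ => (t - (j : ℝ) * h) / δ) :=
        (continuous_id.sub continuous_const).div_const δ
      exact continuous_const.mul
        (((continuous_const.mul (Real.continuous_sin.comp
          (continuous_const.mul hinner))).mul continuous_const).mul continuous_const)
    · intro j
      have hinner : Continuous (fun t : ℝ => (t - (j : ℝ) * h - δ) / (h - δ)) :=
        ((continuous_id.sub continuous_const).sub continuous_const).div_const (h - δ)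
      exact continuous_const.mul
        (((((continuous_const.mul hinner).mul (hinner.sub continuous_const)).mul
          ((continuous_const.mul hinner).sub continuous_const)).mul continuous_const).mul
          continuous_const)
  -- φ is C²
  have hC2 : ContDiff ℝ 2 φ := by
    rw [show (2 : WithTop ℕ∞) = 1 + 1 from by norm_num, contDiff_succ_iff_deriv]
    refine ⟨hdiff, by simp, ?_⟩
    rw [contDiff_one_iff_deriv]
    exact ⟨hdiff2, hcont2⟩
  -- strict monotonicity on each piece
  have SM_A : ∀ j : ℤ, StrictMonoOn φ (Set.Icc ((j : ℝ) * h) ((j : ℝ) * h + δ)) := by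
    intro j
    apply strictMonoOn_of_deriv_pos (convex_Icc _ _) hdiff.continuous.continuousOn
    intro x hx
    rw [interior_Icc] at hx
    rw [(hd1 j x ⟨hx.1.le, hx.2.le⟩).deriv]
    have hu0 : 0 < (x - (j : ℝ) * h) / δ := div_pos (by linarith [hx.1]) hδ
    have hu1 : (x - (j : ℝ) * h) / δ < 1 := (div_lt_one hδ).2 (by linarith [hx.2])
    set u := (x - (j : ℝ) * h) / δ with hu
    have hcos : Real.cos (2 * Real.pi * u) < 1 := by
      refine lt_of_le_of_ne (Real.cos_le_one _) ?_
      intro heq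
      rw [Real.cos_eq_one_iff_of_lt_of_lt (by nlinarith) (by nlinarith)] at heq
      nlinarith
    have : 0 < 1 - Real.cos (2 * Real.pi * u) := by linarith
    have h1δ : 0 < 1 / δ := by positivity
    exact mul_pos hc0 (mul_pos this h1δ)
  have SM_B : ∀ j : ℤ, StrictMonoOn φ (Set.Icc ((j : ℝ) * h + δ) (((j : ℝ) + 1) * h)) := by
    intro j
    apply strictMonoOn_of_deriv_pos (convex_Icc _ _) hdiff.continuous.continuousOn
    intro x hx
    rw [interior_Icc] at hx
    rw [(hd2 j x ⟨hx.1.le, hx.2.le⟩).deriv]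
    have hx2 : x < (j : ℝ) * h + h := by
      have := hx.2
      rw [show ((j : ℝ) + 1) * h = (j : ℝ) * h + h from by ring] at this
      exact this
    have hu0 : 0 < (x - (j : ℝ) * h - δ) / (h - δ) := div_pos (by linarith [hx.1]) hhδ
    have hu1 : (x - (j : ℝ) * h - δ) / (h - δ) < 1 := (div_lt_one hhδ).2 (by linarith)
    set u := (x - (j : ℝ) * h - δ) / (h - δ) with hu
    have h2 : 0 < (u - 1) ^ 2 := by nlinarith
    have h3 : 0 < 30 * u ^ 2 * (u - 1) ^ 2 := by positivity
    have h1δ : 0 < 1 / (h - δ) := by positivity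
    exact mul_pos hhc (mul_pos h3 h1δ)
  have SM_piece : ∀ j : ℤ, StrictMonoOn φ (Set.Icc ((j : ℝ) * h) (((j : ℝ) + 1) * h)) := by
    intro j
    have hle1 : (j : ℝ) * h ≤ (j : ℝ) * h + δ := by linarith
    have hle2 : (j : ℝ) * h + δ ≤ ((j : ℝ) + 1) * h := by
      rw [show ((j : ℝ) + 1) * h = (j : ℝ) * h + h from by ring]
      linarith
    have := (SM_A j).union (SM_B j) (isGreatest_Icc hle1) (isLeast_Icc hle2)
    rwa [Set.Icc_union_Icc_eq_Icc hle1 hle2] at this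
  have SM_N : ∀ m : ℕ, StrictMonoOn φ (Set.Icc (-h) ((m : ℝ) * h)) := by
    intro m
    induction m with
    | zero =>
      have := SM_piece (-1)
      push_cast at this
      norm_num at this
      simpa using this
    | succ m ih =>
      have hm : (0 : ℝ) ≤ (m : ℝ) * h := by positivity
      have pm : StrictMonoOn φ (Set.Icc ((m : ℝ) * h) (((m : ℝ) + 1) * h)) := by
        have := SM_piece (m : ℤ)
        push_cast at this
        exact this
      have hle1 : -h ≤ (m : ℝ) * h := by linarith
      have hle2 : (m : ℝ) * h ≤ ((m : ℝ) + 1) * h := by nlinarith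
      have u := ih.union pm (isGreatest_Icc hle1) (isLeast_Icc hle2)
      rw [Set.Icc_union_Icc_eq_Icc hle1 hle2] at u
      push_cast
      exact u
  refine ⟨hC2.contDiffOn, ?_⟩
  have hceil : (1 : ℝ) ≤ ((⌈1 / h⌉₊ : ℕ) : ℝ) * h := by
    have h1 : (1 / h : ℝ) ≤ (⌈1 / h⌉₊ : ℝ) := Nat.le_ceil _
    have := mul_le_mul_of_nonneg_right h1 hh0.le
    rwa [div_mul_cancel₀ (1:ℝ) hh0.ne'] at this
  exact (SM_N ⌈1 / h⌉₊).mono (Set.Icc_subset_Icc le_rfl hceil)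
end
end

section
/- Assume δ^μ ≤ h. For every integer j and every t in the sub-interval I^j := [jh + δ, (j+1)h], one has φ(t) ≤ (j+1)h, |φ′(t)| ≤ (15/8)·(h − δ^μ)/(h − δ), and |φ″(t)| ≤ (10/√3)·(h − δ^μ)/(h − δ)². -/
noncomputable section
def Pd (z : ℝ) : ℝ := 30 * z ^ 2 * (z - 1) ^ 2
def Pdd (z : ℝ) : ℝ := 60 * z * (z - 1) * (2 * z - 1)
def Sd (z : ℝ) : ℝ := 1 - Real.cos (2 * Real.pi * z)
def Sdd (z : ℝ) : ℝ := 2 * Real.pi * Real.sin (2 * Real.pi * z)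

lemma hasDerivAt_Pfun (z : ℝ) : HasDerivAt Pfun (Pd z) z := by
  have h : HasDerivAt (fun z : ℝ => z ^ 3 * (6 * z ^ 2 - 15 * z + 10))
      ((3 : ℕ) * z ^ 2 * (6 * z ^ 2 - 15 * z + 10) + z ^ 3 * (6 * ((2 : ℕ) * z ^ 1) - 15 * 1)) z := by
    exact (hasDerivAt_pow 3 z).mul ((((hasDerivAt_pow 2 z).const_mul 6).sub
      ((hasDerivAt_id z).const_mul 15)).add_const 10)
  have e : Pfun = fun z : ℝ => z ^ 3 * (6 * z ^ 2 - 15 * z + 10) := rfl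
  rw [e]
  convert h using 1
  unfold Pd; push_cast; ring

lemma hasDerivAt_Pd (z : ℝ) : HasDerivAt Pd (Pdd z) z := by
  have h : HasDerivAt (fun z : ℝ => 30 * z ^ 2 * (z - 1) ^ 2)
      (30 * ((2:ℕ) * z ^ 1) * (z - 1) ^ 2 + 30 * z ^ 2 * ((2:ℕ) * (z - 1) ^ 1 * 1)) z := by
    exact (((hasDerivAt_pow 2 z).const_mul 30)).mul
      (((hasDerivAt_id z).sub_const 1).pow 2)
  have e : Pd = fun z : ℝ => 30 * z ^ 2 * (z - 1) ^ 2 := rfl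
  rw [e]
  convert h using 1
  unfold Pdd; push_cast; ring

lemma hasDerivAt_Sfun (z : ℝ) : HasDerivAt Sfun (Sd z) z := by
  have hlin : HasDerivAt (fun z : ℝ => 2 * Real.pi * z) (2 * Real.pi) z := by
    simpa using (hasDerivAt_id z).const_mul (2 * Real.pi)
  have hs : HasDerivAt (fun z : ℝ => Real.sin (2 * Real.pi * z))
      (Real.cos (2 * Real.pi * z) * (2 * Real.pi)) z := hlin.sin
  have h : HasDerivAt (fun z : ℝ => z - Real.sin (2 * Real.pi * z) / (2 * Real.pi))
      (1 - Real.cos (2 * Real.pi * z) * (2 * Real.pi) / (2 * Real.pi)) z :=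
    (hasDerivAt_id z).sub (hs.div_const (2 * Real.pi))
  have e : Sfun = fun z : ℝ => z - Real.sin (2 * Real.pi * z) / (2 * Real.pi) := rfl
  rw [e]
  convert h using 1
  unfold Sd
  rw [mul_div_assoc, div_self (by positivity : (2 : ℝ) * Real.pi ≠ 0), mul_one]

lemma hasDerivAt_Sd (z : ℝ) : HasDerivAt Sd (Sdd z) z := by
  have hlin : HasDerivAt (fun z : ℝ => 2 * Real.pi * z) (2 * Real.pi) z := by
    simpa using (hasDerivAt_id z).const_mul (2 * Real.pi)
  have hc : HasDerivAt (fun z : ℝ => Real.cos (2 * Real.pi * z))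
      (-Real.sin (2 * Real.pi * z) * (2 * Real.pi)) z := hlin.cos
  have h := (hasDerivAt_const z (1:ℝ)).sub hc
  have e : Sd = fun z : ℝ => 1 - Real.cos (2 * Real.pi * z) := rfl
  rw [e]
  refine h.congr_deriv ?_
  unfold Sdd; ring

lemma hasDerivAt_scaled {f f' : ℝ → ℝ} (hf : ∀ z, HasDerivAt f (f' z) z)
    (C A a k : ℝ) (x : ℝ) :
    HasDerivAt (fun t => C + A * f ((t - a) / k)) (A / k * f' ((x - a) / k)) x := by
  have h1 : HasDerivAt (fun t : ℝ => (t - a) / k) (1 / k) x :=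
    ((hasDerivAt_id x).sub_const a).div_const k
  have h2 := ((hf ((x - a) / k)).comp x h1).const_mul A
  have h3 := h2.const_add C
  refine h3.congr_deriv ?_
  ring

lemma Pfun_le_one {z : ℝ} (h0 : 0 ≤ z) (h1 : z ≤ 1) : Pfun z ≤ 1 := by
  unfold Pfun
  nlinarith [mul_nonneg (pow_nonneg (sub_nonneg.2 h1) 3)
    (by nlinarith [sq_nonneg z] : (0:ℝ) ≤ 6 * z ^ 2 + 3 * z + 1)]

lemma Pd_le {z : ℝ} (h0 : 0 ≤ z) (h1 : z ≤ 1) : Pd z ≤ 15 / 8 := by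
  unfold Pd
  nlinarith [sq_nonneg (z - 1/2), sq_nonneg (z * (1 - z)), mul_nonneg h0 (sub_nonneg.2 h1)]

lemma abs_Pdd_le {z : ℝ} (h0 : 0 ≤ z) (h1 : z ≤ 1) : |Pdd z| ≤ 10 / Real.sqrt 3 := by
  have hc : (0:ℝ) ≤ 10 / Real.sqrt 3 := by positivity
  have hsq : (Pdd z) ^ 2 ≤ (10 / Real.sqrt 3) ^ 2 := by
    have : (10 / Real.sqrt 3) ^ 2 = 100 / 3 := by
      rw [div_pow, Real.sq_sqrt (by norm_num : (3:ℝ) ≥ 0)]; norm_num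
    rw [this]
    unfold Pdd
    nlinarith [mul_nonneg (sq_nonneg (12 * (z - 1/2)^2 - 1))
      (by nlinarith [mul_nonneg h0 (sub_nonneg.2 h1)] : (0:ℝ) ≤ 1 - 3 * (z - 1/2)^2)]
  calc |Pdd z| = Real.sqrt ((Pdd z)^2) := (Real.sqrt_sq_eq_abs _).symm
    _ ≤ Real.sqrt ((10 / Real.sqrt 3)^2) := Real.sqrt_le_sqrt hsq
    _ = 10 / Real.sqrt 3 := Real.sqrt_sq hc

lemma Pd_nonneg (z : ℝ) : 0 ≤ Pd z := by unfold Pd; positivity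
lemma Sd_one : Sd 1 = 0 := by unfold Sd; rw [mul_one, Real.cos_two_pi]; ring
lemma Sd_zero : Sd 0 = 0 := by simp [Sd]
lemma Sdd_one : Sdd 1 = 0 := by unfold Sdd; rw [mul_one, Real.sin_two_pi]; ring
lemma Sdd_zero : Sdd 0 = 0 := by simp [Sdd]
lemma Pd_zero : Pd 0 = 0 := by simp [Pd]
lemma Pd_one : Pd 1 = 0 := by norm_num [Pd]
lemma Pdd_zero : Pdd 0 = 0 := by simp [Pdd]
lemma Pdd_one : Pdd 1 = 0 := by norm_num [Pdd]

lemma junction_deriv {φ f g : ℝ → ℝ} {f' g' : ℝ} {p q t : ℝ} (hp : p < t) (hq : t < q)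
    (hfd : HasDerivAt f f' t) (hgd : HasDerivAt g g' t) (hfg : f' = g')
    (hfe : ∀ x ∈ Set.Icc p t, φ x = f x) (hge : ∀ x ∈ Set.Icc t q, φ x = g x) :
    HasDerivAt φ f' t := by
  have hm1 : Set.Icc p t ∈ nhdsWithin t (Set.Iic t) := by
    apply Filter.mem_of_superset
      (Filter.inter_mem (mem_nhdsWithin_of_mem_nhds (Ioi_mem_nhds hp)) self_mem_nhdsWithin)
    rintro x ⟨h1, h2⟩; exact ⟨le_of_lt h1, h2⟩
  have hm2 : Set.Icc t q ∈ nhdsWithin t (Set.Ici t) := by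
    apply Filter.mem_of_superset
      (Filter.inter_mem (mem_nhdsWithin_of_mem_nhds (Iio_mem_nhds hq)) self_mem_nhdsWithin)
    rintro x ⟨h1, h2⟩; exact ⟨h2, le_of_lt h1⟩
  have h1 : HasDerivWithinAt φ f' (Set.Iic t) t :=
    hfd.hasDerivWithinAt.congr_of_eventuallyEq
      (Filter.eventuallyEq_of_mem hm1 hfe) (hfe t ⟨le_of_lt hp, le_refl t⟩)
  have h2 : HasDerivWithinAt φ f' (Set.Ici t) t := by
    rw [hfg]
    exact hgd.hasDerivWithinAt.congr_of_eventuallyEq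
      (Filter.eventuallyEq_of_mem hm2 hge) (hge t ⟨le_refl t, le_of_lt hq⟩)
  have h3 := h1.union h2
  rw [Set.Iic_union_Ici] at h3
  exact hasDerivWithinAt_univ.1 h3

lemma deriv_congr_Ioo {φ f : ℝ → ℝ} {p q x : ℝ} (hx : x ∈ Set.Ioo p q)
    (hfe : ∀ y ∈ Set.Ioo p q, φ y = f y) : deriv φ x = deriv f x :=
  (Filter.eventuallyEq_of_mem (Ioo_mem_nhds hx.1 hx.2) hfe).deriv_eq

lemma deriv2_congr_Ioo {φ f : ℝ → ℝ} {p q x : ℝ} (hx : x ∈ Set.Ioo p q)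
    (hfe : ∀ y ∈ Set.Ioo p q, φ y = f y) : deriv (deriv φ) x = deriv (deriv f) x :=
  ((Filter.eventuallyEq_of_mem (Ioo_mem_nhds hx.1 hx.2) hfe).deriv).deriv_eq

def comps (f : ℝ → ℝ) (C A a k : ℝ) : ℝ → ℝ := fun x => C + A * f ((x - a) / k)
def compd (f' : ℝ → ℝ) (A a k : ℝ) : ℝ → ℝ := fun x => A / k * f' ((x - a) / k)

lemma hasDerivAt_comps {f f' : ℝ → ℝ} (hf : ∀ z, HasDerivAt f (f' z) z) (C A a k x : ℝ) :
    HasDerivAt (comps f C A a k) (compd f' A a k x) x := hasDerivAt_scaled hf C A a k x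

lemma hasDerivAt_compd {f' f'' : ℝ → ℝ} (hf : ∀ z, HasDerivAt f' (f'' z) z) (A a k x : ℝ) :
    HasDerivAt (compd f' A a k) (compd f'' (A / k) a k x) x := by
  have h := hasDerivAt_scaled hf 0 (A / k) a k x
  simp only [zero_add] at h
  exact h

lemma compd_self {f' : ℝ → ℝ} (h0 : f' 0 = 0) (A a k : ℝ) : compd f' A a k a = 0 := by
  unfold compd; rw [sub_self, zero_div, h0, mul_zero]

lemma compd_right {f' : ℝ → ℝ} {k : ℝ} (hk : k ≠ 0) (h1 : f' 1 = 0) (A a : ℝ) :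
    compd f' A a k (a + k) = 0 := by
  unfold compd; rw [add_sub_cancel_left, div_self hk, h1, mul_zero]

lemma glue_deriv {ψ fL fR : ℝ → ℝ} {fL' fR' : ℝ} {p q t : ℝ}
    (hp : p < t) (hq : t < q)
    (hL : ∀ x ∈ Set.Ioo p t, ψ x = fL x) (htL : ψ t = fL t) (htR : fL t = fR t)
    (hR : ∀ x ∈ Set.Ioo t q, ψ x = fR x)
    (hfd : HasDerivAt fL fL' t) (hgd : HasDerivAt fR fR' t) (hfg : fL' = fR') :
    deriv ψ t = fL' := by
  apply HasDerivAt.deriv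
  refine junction_deriv (show (p + t) / 2 < t by linarith) (show t < (t + q) / 2 by linarith)
    hfd hgd hfg ?_ ?_
  · intro x hx
    rcases eq_or_lt_of_le hx.2 with hxt | hxt
    · rw [hxt, htL]
    · exact hL x ⟨by linarith [hx.1], hxt⟩
  · intro x hx
    rcases eq_or_lt_of_le hx.1 with hxt | hxt
    · rw [← hxt, htL, htR]
    · exact hR x ⟨hxt, by linarith [hx.2]⟩

lemma main_aux (δ μ h a : ℝ) (hδ : 0 < δ) (hδh : δ < h) (hle : δ ^ μ ≤ h)
    (φ : ℝ → ℝ)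
    (e1 : ∀ x ∈ Set.Icc a (a + δ), φ x = a + δ ^ μ * Sfun ((x - a) / δ))
    (e2 : ∀ x ∈ Set.Icc (a + δ) (a + h),
      φ x = a + δ ^ μ + (h - δ ^ μ) * Pfun ((x - (a + δ)) / (h - δ)))
    (e3 : ∀ x ∈ Set.Icc (a + h) (a + h + δ),
      φ x = a + h + δ ^ μ * Sfun ((x - (a + h)) / δ))
    (t : ℝ) (ht : t ∈ Set.Icc (a + δ) (a + h)) :
    φ t ≤ a + h ∧ |deriv φ t| ≤ 15 / 8 * (h - δ ^ μ) / (h - δ) ∧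
      |deriv (deriv φ) t| ≤ 10 / Real.sqrt 3 * (h - δ ^ μ) / (h - δ) ^ 2 := by
  obtain ⟨ht1, ht2⟩ := ht
  have hk : (0:ℝ) < h - δ := by linarith
  have hkne : h - δ ≠ 0 := ne_of_gt hk
  have hc1 : (0:ℝ) ≤ h - δ ^ μ := by linarith
  have hAk : (0:ℝ) ≤ (h - δ ^ μ) / (h - δ) := div_nonneg hc1 hk.le
  have hab : a < a + δ := by linarith
  have hbc : a + δ < a + h := by linarith
  have hcd : a + h < a + h + δ := by linarith
  have hch : a + h = (a + δ) + (h - δ) := by ring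
  have hB1 : (0:ℝ) ≤ 15 / 8 * (h - δ ^ μ) / (h - δ) :=
    div_nonneg (mul_nonneg (by norm_num) hc1) hk.le
  have hB2 : (0:ℝ) ≤ 10 / Real.sqrt 3 * (h - δ ^ μ) / (h - δ) ^ 2 :=
    div_nonneg (mul_nonneg (by positivity) hc1) (by positivity)
  have hz0 : 0 ≤ (t - (a + δ)) / (h - δ) := div_nonneg (by linarith) hk.le
  have hz1 : (t - (a + δ)) / (h - δ) ≤ 1 := by rw [div_le_one hk]; linarith
  -- part 1
  have part1 : φ t ≤ a + h := by
    rw [e2 t ⟨ht1, ht2⟩]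
    have := mul_le_mul_of_nonneg_left (Pfun_le_one hz0 hz1) hc1
    linarith
  -- function pieces and derivatives
  have e1' : ∀ x ∈ Set.Icc a (a + δ), φ x = comps Sfun a (δ ^ μ) a δ x := e1
  have e2' : ∀ x ∈ Set.Icc (a + δ) (a + h),
      φ x = comps Pfun (a + δ ^ μ) (h - δ ^ μ) (a + δ) (h - δ) x := by
    intro x hx
    rw [e2 x hx]
    show _ = a + δ ^ μ + (h - δ ^ μ) * Pfun ((x - (a + δ)) / (h - δ))
    ring_nf
  have e3' : ∀ x ∈ Set.Icc (a + h) (a + h + δ),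
      φ x = comps Sfun (a + h) (δ ^ μ) (a + h) δ x := e3
  have hSf := hasDerivAt_comps hasDerivAt_Sfun a (δ ^ μ) a δ
  have hF := hasDerivAt_comps hasDerivAt_Pfun (a + δ ^ μ) (h - δ ^ μ) (a + δ) (h - δ)
  have hS2f := hasDerivAt_comps hasDerivAt_Sfun (a + h) (δ ^ μ) (a + h) δ
  have hSg := hasDerivAt_compd hasDerivAt_Sd (δ ^ μ) a δ
  have hG := hasDerivAt_compd hasDerivAt_Pd (h - δ ^ μ) (a + δ) (h - δ)
  have hS2g := hasDerivAt_compd hasDerivAt_Sd (δ ^ μ) (a + h) δ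
  -- zero values
  have vSg_b : compd Sd (δ ^ μ) a δ (a + δ) = 0 := compd_right hδ.ne' Sd_one _ _
  have vG_b : compd Pd (h - δ ^ μ) (a + δ) (h - δ) (a + δ) = 0 := compd_self Pd_zero _ _ _
  have vG_c : compd Pd (h - δ ^ μ) (a + δ) (h - δ) (a + h) = 0 := by
    rw [hch]; exact compd_right hkne Pd_one _ _
  have vS2g_c : compd Sd (δ ^ μ) (a + h) δ (a + h) = 0 := compd_self Sd_zero _ _ _
  have vSgg_b : compd Sdd (δ ^ μ / δ) a δ (a + δ) = 0 := compd_right hδ.ne' Sdd_one _ _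
  have vGg_b : compd Pdd ((h - δ ^ μ) / (h - δ)) (a + δ) (h - δ) (a + δ) = 0 :=
    compd_self Pdd_zero _ _ _
  have vGg_c : compd Pdd ((h - δ ^ μ) / (h - δ)) (a + δ) (h - δ) (a + h) = 0 := by
    rw [hch]; exact compd_right hkne Pdd_one _ _
  have vS2gg_c : compd Sdd (δ ^ μ / δ) (a + h) δ (a + h) = 0 := compd_self Sdd_zero _ _ _
  -- derivative of φ at the two junctions
  have hDb : HasDerivAt φ 0 (a + δ) := by
    have := junction_deriv hab hbc (hSf (a + δ)) (hF (a + δ))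
      (by rw [vSg_b, vG_b]) e1' e2'
    rwa [vSg_b] at this
  have hDc : HasDerivAt φ 0 (a + h) := by
    have := junction_deriv hbc hcd (hF (a + h)) (hS2f (a + h))
      (by rw [vG_c, vS2g_c]) e2' e3'
    rwa [vG_c] at this
  -- derivative of φ on the open pieces
  have hdS : ∀ x ∈ Set.Ioo a (a + δ), deriv φ x = compd Sd (δ ^ μ) a δ x := by
    intro x hx
    rw [deriv_congr_Ioo hx (fun y hy => e1' y (Set.Ioo_subset_Icc_self hy))]
    exact (hSf x).deriv
  have hdP : ∀ x ∈ Set.Ioo (a + δ) (a + h),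
      deriv φ x = compd Pd (h - δ ^ μ) (a + δ) (h - δ) x := by
    intro x hx
    rw [deriv_congr_Ioo hx (fun y hy => e2' y (Set.Ioo_subset_Icc_self hy))]
    exact (hF x).deriv
  have hdS2 : ∀ x ∈ Set.Ioo (a + h) (a + h + δ),
      deriv φ x = compd Sd (δ ^ μ) (a + h) δ x := by
    intro x hx
    rw [deriv_congr_Ioo hx (fun y hy => e3' y (Set.Ioo_subset_Icc_self hy))]
    exact (hS2f x).deriv
  refine ⟨part1, ?_⟩
  rcases eq_or_lt_of_le ht1 with hE1 | hlt1
  · -- t = a + δ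
    rw [← hE1]
    constructor
    · rw [hDb.deriv]; simpa using hB1
    · have hd2 : deriv (deriv φ) (a + δ) = compd Sdd (δ ^ μ / δ) a δ (a + δ) :=
        glue_deriv hab hbc hdS (by rw [hDb.deriv, vSg_b]) (by rw [vSg_b, vG_b]) hdP
          (hSg (a + δ)) (hG (a + δ)) (by rw [vSgg_b, vGg_b])
      rw [hd2, vSgg_b]; simpa using hB2
  rcases eq_or_lt_of_le ht2 with hE2 | hlt2
  · -- t = a + h
    rw [hE2]
    constructor
    · rw [hDc.deriv]; simpa using hB1
    · have hd2 : deriv (deriv φ) (a + h) = compd Pdd ((h - δ ^ μ) / (h - δ)) (a + δ) (h - δ) (a + h) :=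
        glue_deriv hbc hcd hdP (by rw [hDc.deriv, vG_c]) (by rw [vG_c, vS2g_c]) hdS2
          (hG (a + h)) (hS2g (a + h)) (by rw [vGg_c, vS2gg_c])
      rw [hd2, vGg_c]; simpa using hB2
  -- interior
  have htI : t ∈ Set.Ioo (a + δ) (a + h) := ⟨hlt1, hlt2⟩
  constructor
  · rw [hdP t htI]
    show |(h - δ ^ μ) / (h - δ) * Pd ((t - (a + δ)) / (h - δ))| ≤ _
    rw [abs_of_nonneg (mul_nonneg hAk (Pd_nonneg _))]
    calc (h - δ ^ μ) / (h - δ) * Pd ((t - (a + δ)) / (h - δ))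
        ≤ (h - δ ^ μ) / (h - δ) * (15 / 8) :=
          mul_le_mul_of_nonneg_left (Pd_le hz0 hz1) hAk
      _ = 15 / 8 * (h - δ ^ μ) / (h - δ) := by ring
  · have hEq : deriv (deriv φ) t =
        deriv (compd Pd (h - δ ^ μ) (a + δ) (h - δ)) t :=
      (Filter.eventuallyEq_of_mem (Ioo_mem_nhds htI.1 htI.2) hdP).deriv_eq
    rw [hEq, (hG t).deriv]
    show |(h - δ ^ μ) / (h - δ) / (h - δ) * Pdd ((t - (a + δ)) / (h - δ))| ≤ _
    rw [abs_mul, abs_of_nonneg (div_nonneg hAk hk.le)]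
    calc (h - δ ^ μ) / (h - δ) / (h - δ) * |Pdd ((t - (a + δ)) / (h - δ))|
        ≤ (h - δ ^ μ) / (h - δ) / (h - δ) * (10 / Real.sqrt 3) :=
          mul_le_mul_of_nonneg_left (abs_Pdd_le hz0 hz1) (div_nonneg hAk hk.le)
      _ = 10 / Real.sqrt 3 * (h - δ ^ μ) / (h - δ) ^ 2 := by
          rw [div_div, ← sq]; ring

/-- bounds for φ and its derivatives on the sub-intervals I^j = [jh+δ, (j+1)h]. -/
theorem phi_bounds_interval
    (N : ℕ) (hN : 2 ≤ N) (δ : ℝ) (hδ : 0 < δ) (μ : ℝ) (hμ : 0 < μ)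
    (h : ℝ) (hh : h = (N : ℝ) * δ)
    (φ : ℝ → ℝ)
    (hφS : ∀ j : ℤ, ∀ t ∈ Set.Icc ((j : ℝ) * h) ((j : ℝ) * h + δ),
      φ t = (j : ℝ) * h + δ ^ μ * Sfun ((t - (j : ℝ) * h) / δ))
    (hφP : ∀ j : ℤ, ∀ t ∈ Set.Icc ((j : ℝ) * h + δ) (((j : ℝ) + 1) * h),
      φ t = (j : ℝ) * h + δ ^ μ + (h - δ ^ μ) * Pfun ((t - (j : ℝ) * h - δ) / (h - δ)))
    (hle : δ ^ μ ≤ h) :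
    ∀ j : ℤ, ∀ t ∈ Set.Icc ((j : ℝ) * h + δ) (((j : ℝ) + 1) * h),
      φ t ≤ ((j : ℝ) + 1) * h ∧
      |deriv φ t| ≤ (15 / 8) * (h - δ ^ μ) / (h - δ) ∧
      |deriv (deriv φ) t| ≤ (10 / Real.sqrt 3) * (h - δ ^ μ) / (h - δ) ^ 2 := by
  intro j t ht
  have hN2 : (2:ℝ) ≤ (N:ℝ) := by exact_mod_cast hN
  have hδh : δ < h := by rw [hh]; nlinarith
  have hc : ((j:ℝ) + 1) * h = (j:ℝ) * h + h := by ring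
  set a : ℝ := (j:ℝ) * h with ha
  have e1 : ∀ x ∈ Set.Icc a (a + δ), φ x = a + δ ^ μ * Sfun ((x - a) / δ) := hφS j
  have e2 : ∀ x ∈ Set.Icc (a + δ) (a + h),
      φ x = a + δ ^ μ + (h - δ ^ μ) * Pfun ((x - (a + δ)) / (h - δ)) := by
    intro x hx
    have hx' : x ∈ Set.Icc ((j:ℝ) * h + δ) (((j:ℝ) + 1) * h) := by
      rw [hc]; exact hx
    rw [hφP j x hx', sub_sub]
  have e3 : ∀ x ∈ Set.Icc (a + h) (a + h + δ),
      φ x = a + h + δ ^ μ * Sfun ((x - (a + h)) / δ) := by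
    intro x hx
    have hcast : ((j + 1 : ℤ) : ℝ) * h = a + h := by push_cast; ring
    have hx' : x ∈ Set.Icc (((j + 1 : ℤ) : ℝ) * h) (((j + 1 : ℤ) : ℝ) * h + δ) := by
      rw [hcast]; exact hx
    rw [hφS (j + 1) x hx', hcast]
  have ht' : t ∈ Set.Icc (a + δ) (a + h) := by rw [hc] at ht; exact ht
  have := main_aux δ μ h a hδ hδh hle φ e1 e2 e3 t ht'
  rw [hc]
  exact this
end
end

section
/- Assume δ^μ < h. Then for each q ∈ {1,…,N}, the inner function ψ_q is twice continuously differentiable on [0,1], strictly increasing on [0,1], satisfies ψ_q(0) = 0 and ψ_q(1) = 1, and maps [0,1] onto [0,1]. -/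
noncomputable section

/-- The inner function `ψ_q(x) = φ(x + (1-q)δ) - φ((1-q)δ)`. -/
def psi (φ : ℝ → ℝ) (δ : ℝ) (q : ℕ) (x : ℝ) : ℝ :=
  φ (x + (1 - (q : ℝ)) * δ) - φ ((1 - (q : ℝ)) * δ)

namespace StmtAux


open Set Real

def Sd (z : ℝ) : ℝ := 1 - Real.cos (2 * Real.pi * z)
def Sdd (z : ℝ) : ℝ := 2 * Real.pi * Real.sin (2 * Real.pi * z)
def Pd (z : ℝ) : ℝ := 30 * z ^ 2 * (z - 1) ^ 2
def Pdd (z : ℝ) : ℝ := 60 * z * (z - 1) * (2 * z - 1)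

lemma hasDerivAt_Sfun (z : ℝ) : HasDerivAt Sfun (Sd z) z := by
  have h1 : HasDerivAt (fun z : ℝ => Real.sin (2 * Real.pi * z)) (Real.cos (2*Real.pi*z) * (2*Real.pi)) z := by
    simpa [Function.comp_def] using (Real.hasDerivAt_sin (2*Real.pi*z)).comp z ((hasDerivAt_id z).const_mul (2*Real.pi))
  have := (hasDerivAt_id z).sub (h1.div_const (2*Real.pi))
  refine this.congr_deriv ?_
  field_simp [Sd, Real.pi_ne_zero]; rfl

lemma hasDerivAt_Sd (z : ℝ) : HasDerivAt Sd (Sdd z) z := by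
  have h1 : HasDerivAt (fun z : ℝ => Real.cos (2 * Real.pi * z)) (-Real.sin (2*Real.pi*z) * (2*Real.pi)) z := by
    simpa [Function.comp_def] using (Real.hasDerivAt_cos (2*Real.pi*z)).comp z ((hasDerivAt_id z).const_mul (2*Real.pi))
  have := (hasDerivAt_const z (1:ℝ)).sub h1
  refine this.congr_deriv ?_
  unfold Sdd; ring

lemma continuous_Sdd : Continuous Sdd := by
  unfold Sdd; fun_prop

lemma hasDerivAt_Pfun (z : ℝ) : HasDerivAt Pfun (Pd z) z := by
  have : HasDerivAt (fun z : ℝ => z ^ 3 * (6 * z ^ 2 - 15 * z + 10))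
      (3 * z ^ 2 * (6 * z ^ 2 - 15 * z + 10) + z ^ 3 * (6 * (2 * z) - 15)) z := by
    have h1 : HasDerivAt (fun z : ℝ => z ^ 3) (3 * z ^ 2) z := by
      simpa using hasDerivAt_pow 3 z
    have h2 : HasDerivAt (fun z : ℝ => 6 * z ^ 2 - 15 * z + 10) (6 * (2 * z) - 15) z := by
      have := ((hasDerivAt_pow 2 z).const_mul 6).sub ((hasDerivAt_id z).const_mul 15)
      simpa using this.add_const 10
    simpa [Pi.mul_def] using h1.mul h2
  refine this.congr_deriv ?_
  unfold Pd; ring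

lemma hasDerivAt_Pd (z : ℝ) : HasDerivAt Pd (Pdd z) z := by
  have : HasDerivAt (fun z : ℝ => 30 * z ^ 2 * (z - 1) ^ 2)
      (30 * (2 * z) * (z - 1) ^ 2 + 30 * z ^ 2 * (2 * (z - 1))) z := by
    have h1 : HasDerivAt (fun z : ℝ => 30 * z ^ 2) (30 * (2 * z)) z := by
      simpa using (hasDerivAt_pow 2 z).const_mul 30
    have h2 : HasDerivAt (fun z : ℝ => (z - 1) ^ 2) (2 * (z - 1)) z := by
      have := (hasDerivAt_pow 2 (z - 1)).comp z ((hasDerivAt_id z).sub_const 1)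
      simpa [Function.comp_def] using this
    simpa [Pi.mul_def] using h1.mul h2
  refine this.congr_deriv ?_
  unfold Pdd; ring

lemma continuous_Pdd : Continuous Pdd := by
  unfold Pdd; fun_prop

lemma Sd_zero : Sd 0 = 0 := by simp [Sd]
lemma Sd_one : Sd 1 = 0 := by simp [Sd, Real.cos_two_pi]
lemma Sdd_zero : Sdd 0 = 0 := by simp [Sdd]
lemma Sdd_one : Sdd 1 = 0 := by simp [Sdd, Real.sin_two_pi]
lemma Pd_zero : Pd 0 = 0 := by simp [Pd]
lemma Pd_one : Pd 1 = 0 := by simp [Pd]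
lemma Pdd_zero : Pdd 0 = 0 := by simp [Pdd]
lemma Pdd_one : Pdd 1 = 0 := by simp [Pdd]
lemma Sfun_zero : Sfun 0 = 0 := by simp [Sfun]
lemma Sfun_one : Sfun 1 = 1 := by simp [Sfun, Real.sin_two_pi]
lemma Pfun_zero : Pfun 0 = 0 := by simp [Pfun]
lemma Pfun_one : Pfun 1 = 1 := by norm_num [Pfun]

lemma Sd_nonneg (z : ℝ) : 0 ≤ Sd z := by
  have := Real.cos_le_one (2 * Real.pi * z); unfold Sd; linarith
lemma Pd_nonneg (z : ℝ) : 0 ≤ Pd z := by unfold Pd; positivity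
lemma Sd_pos {z : ℝ} (h0 : 0 < z) (h1 : z < 1) : 0 < Sd z := by
  have hpi := Real.pi_pos
  have hx0 : (0:ℝ) < 2 * Real.pi * z := by positivity
  have hx2 : 2 * Real.pi * z < 2 * Real.pi := by nlinarith
  have hne : Real.cos (2 * Real.pi * z) ≠ 1 := by
    intro hc
    have := (Real.cos_eq_one_iff_of_lt_of_lt (by linarith) hx2).1 hc
    linarith
  have hle := Real.cos_le_one (2 * Real.pi * z)
  have : Real.cos (2 * Real.pi * z) < 1 := lt_of_le_of_ne hle hne
  unfold Sd; linarith
lemma Pd_pos {z : ℝ} (h0 : 0 < z) (h1 : z < 1) : 0 < Pd z := by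
  unfold Pd
  have h2 : (0:ℝ) < (z - 1) ^ 2 := sq_pos_of_ne_zero (sub_ne_zero.2 (ne_of_lt h1))
  have h3 : (0:ℝ) < 30 * z ^ 2 := by positivity
  exact mul_pos h3 h2


open Set Filter

section Glue
variable {h δ : ℝ}

lemma floor_bounds (h0 : 0 < h) (t : ℝ) :
    ((⌊t/h⌋ : ℝ) * h ≤ t ∧ t < ((⌊t/h⌋ : ℝ) + 1) * h) := by
  constructor
  · have := Int.floor_le (t/h)
    rw [le_div_iff₀ h0] at this
    linarith
  · have := Int.lt_floor_add_one (t/h)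
    rw [div_lt_iff₀ h0] at this
    linarith

lemma glue_hasDerivAt (hδ : 0 < δ) (hδh : δ < h)
    (f d : ℝ → ℝ) (A B : ℤ → ℝ → ℝ)
    (hA : ∀ j : ℤ, ∀ t ∈ Set.Icc ((j:ℝ)*h) ((j:ℝ)*h+δ), f t = A j t)
    (hB : ∀ j : ℤ, ∀ t ∈ Set.Icc ((j:ℝ)*h+δ) (((j:ℝ)+1)*h), f t = B j t)
    (hA' : ∀ j : ℤ, ∀ t ∈ Set.Icc ((j:ℝ)*h) ((j:ℝ)*h+δ), HasDerivAt (A j) (d t) t)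
    (hB' : ∀ j : ℤ, ∀ t ∈ Set.Icc ((j:ℝ)*h+δ) (((j:ℝ)+1)*h), HasDerivAt (B j) (d t) t)
    (t : ℝ) : HasDerivAt f (d t) t := by
  have h0 : 0 < h := hδ.trans hδh
  set j := ⌊t/h⌋ with hjdef
  obtain ⟨hj1, hj2⟩ := floor_bounds h0 t
  have hright : HasDerivWithinAt f (d t) (Set.Ici t) t := by
    rcases lt_or_ge t ((j:ℝ)*h + δ) with hcase | hcase
    · have hmem : Set.Icc ((j:ℝ)*h) ((j:ℝ)*h+δ) ∈ nhdsWithin t (Set.Ici t) :=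
        Filter.mem_of_superset (Icc_mem_nhdsGE hcase) (Set.Icc_subset_Icc_left hj1)
      exact ((hA' j t ⟨hj1, hcase.le⟩).hasDerivWithinAt).congr_of_eventuallyEq
        (Filter.eventuallyEq_of_mem hmem (fun x hx => hA j x hx)) (hA j t ⟨hj1, hcase.le⟩)
    · have hmem : Set.Icc ((j:ℝ)*h+δ) (((j:ℝ)+1)*h) ∈ nhdsWithin t (Set.Ici t) :=
        Filter.mem_of_superset (Icc_mem_nhdsGE hj2) (Set.Icc_subset_Icc_left hcase)
      exact ((hB' j t ⟨hcase, hj2.le⟩).hasDerivWithinAt).congr_of_eventuallyEq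
        (Filter.eventuallyEq_of_mem hmem (fun x hx => hB j x hx)) (hB j t ⟨hcase, hj2.le⟩)
  have hleft : HasDerivWithinAt f (d t) (Set.Iic t) t := by
    rcases lt_or_ge ((j:ℝ)*h + δ) t with hcase | hcase
    · have hmem : Set.Icc ((j:ℝ)*h+δ) (((j:ℝ)+1)*h) ∈ nhdsWithin t (Set.Iic t) :=
        Filter.mem_of_superset (Icc_mem_nhdsLE hcase) (Set.Icc_subset_Icc_right hj2.le)
      exact ((hB' j t ⟨hcase.le, hj2.le⟩).hasDerivWithinAt).congr_of_eventuallyEq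
        (Filter.eventuallyEq_of_mem hmem (fun x hx => hB j x hx)) (hB j t ⟨hcase.le, hj2.le⟩)
    · rcases eq_or_lt_of_le hj1 with heq | hlt
      · -- t = j*h : use piece B (j-1)
        have e1 : ((j - 1 : ℤ) : ℝ) = (j:ℝ) - 1 := by push_cast; ring
        have hmemt : t ∈ Set.Icc (((j-1:ℤ)):ℝ) ((((j-1:ℤ)):ℝ) + 1) → True := fun _ => trivial
        have ht1 : ((j-1:ℤ):ℝ)*h + δ < t := by rw [e1]; nlinarith [heq]
        have ht2 : t ≤ (((j-1:ℤ):ℝ) + 1)*h := by rw [e1]; nlinarith [heq]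
        have hmem : Set.Icc (((j-1:ℤ):ℝ)*h+δ) ((((j-1:ℤ):ℝ)+1)*h) ∈ nhdsWithin t (Set.Iic t) :=
          Filter.mem_of_superset (Icc_mem_nhdsLE ht1) (Set.Icc_subset_Icc_right ht2)
        exact ((hB' (j-1) t ⟨ht1.le, ht2⟩).hasDerivWithinAt).congr_of_eventuallyEq
          (Filter.eventuallyEq_of_mem hmem (fun x hx => hB (j-1) x hx)) (hB (j-1) t ⟨ht1.le, ht2⟩)
      · have hmem : Set.Icc ((j:ℝ)*h) ((j:ℝ)*h+δ) ∈ nhdsWithin t (Set.Iic t) :=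
          Filter.mem_of_superset (Icc_mem_nhdsLE hlt) (Set.Icc_subset_Icc_right hcase)
        exact ((hA' j t ⟨hj1, hcase⟩).hasDerivWithinAt).congr_of_eventuallyEq
          (Filter.eventuallyEq_of_mem hmem (fun x hx => hA j x hx)) (hA j t ⟨hj1, hcase⟩)
  have := hleft.union hright
  rw [Set.Iic_union_Ici] at this
  exact this.hasDerivAt (by simp)

lemma glue_continuousAt (hδ : 0 < δ) (hδh : δ < h)
    (f : ℝ → ℝ) (A B : ℤ → ℝ → ℝ)
    (hA : ∀ j : ℤ, ∀ t ∈ Set.Icc ((j:ℝ)*h) ((j:ℝ)*h+δ), f t = A j t)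
    (hB : ∀ j : ℤ, ∀ t ∈ Set.Icc ((j:ℝ)*h+δ) (((j:ℝ)+1)*h), f t = B j t)
    (hA' : ∀ j : ℤ, Continuous (A j)) (hB' : ∀ j : ℤ, Continuous (B j))
    (t : ℝ) : ContinuousAt f t := by
  have h0 : 0 < h := hδ.trans hδh
  set j := ⌊t/h⌋ with hjdef
  obtain ⟨hj1, hj2⟩ := floor_bounds h0 t
  have hright : ContinuousWithinAt f (Set.Ici t) t := by
    rcases lt_or_ge t ((j:ℝ)*h + δ) with hcase | hcase
    · have hmem : Set.Icc ((j:ℝ)*h) ((j:ℝ)*h+δ) ∈ nhdsWithin t (Set.Ici t) :=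
        Filter.mem_of_superset (Icc_mem_nhdsGE hcase) (Set.Icc_subset_Icc_left hj1)
      exact ((hA' j).continuousAt.continuousWithinAt).congr_of_eventuallyEq
        (Filter.eventuallyEq_of_mem hmem (fun x hx => hA j x hx)) (hA j t ⟨hj1, hcase.le⟩)
    · have hmem : Set.Icc ((j:ℝ)*h+δ) (((j:ℝ)+1)*h) ∈ nhdsWithin t (Set.Ici t) :=
        Filter.mem_of_superset (Icc_mem_nhdsGE hj2) (Set.Icc_subset_Icc_left hcase)
      exact ((hB' j).continuousAt.continuousWithinAt).congr_of_eventuallyEq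
        (Filter.eventuallyEq_of_mem hmem (fun x hx => hB j x hx)) (hB j t ⟨hcase, hj2.le⟩)
  have hleft : ContinuousWithinAt f (Set.Iic t) t := by
    rcases lt_or_ge ((j:ℝ)*h + δ) t with hcase | hcase
    · have hmem : Set.Icc ((j:ℝ)*h+δ) (((j:ℝ)+1)*h) ∈ nhdsWithin t (Set.Iic t) :=
        Filter.mem_of_superset (Icc_mem_nhdsLE hcase) (Set.Icc_subset_Icc_right hj2.le)
      exact ((hB' j).continuousAt.continuousWithinAt).congr_of_eventuallyEq
        (Filter.eventuallyEq_of_mem hmem (fun x hx => hB j x hx)) (hB j t ⟨hcase.le, hj2.le⟩)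
    · rcases eq_or_lt_of_le hj1 with heq | hlt
      · have e1 : ((j - 1 : ℤ) : ℝ) = (j:ℝ) - 1 := by push_cast; ring
        have ht1 : ((j-1:ℤ):ℝ)*h + δ < t := by rw [e1]; nlinarith [heq]
        have ht2 : t ≤ (((j-1:ℤ):ℝ) + 1)*h := by rw [e1]; nlinarith [heq]
        have hmem : Set.Icc (((j-1:ℤ):ℝ)*h+δ) ((((j-1:ℤ):ℝ)+1)*h) ∈ nhdsWithin t (Set.Iic t) :=
          Filter.mem_of_superset (Icc_mem_nhdsLE ht1) (Set.Icc_subset_Icc_right ht2)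
        exact ((hB' (j-1)).continuousAt.continuousWithinAt).congr_of_eventuallyEq
          (Filter.eventuallyEq_of_mem hmem (fun x hx => hB (j-1) x hx)) (hB (j-1) t ⟨ht1.le, ht2⟩)
      · have hmem : Set.Icc ((j:ℝ)*h) ((j:ℝ)*h+δ) ∈ nhdsWithin t (Set.Iic t) :=
          Filter.mem_of_superset (Icc_mem_nhdsLE hlt) (Set.Icc_subset_Icc_right hcase)
        exact ((hA' j).continuousAt.continuousWithinAt).congr_of_eventuallyEq
          (Filter.eventuallyEq_of_mem hmem (fun x hx => hA j x hx)) (hA j t ⟨hj1, hcase⟩)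
  have := hleft.union hright
  rw [Set.Iic_union_Ici] at this
  exact (continuousWithinAt_univ f t).mp this

end Glue

open Set Filter


noncomputable def G1 (δ h c1 c2 : ℝ) (t : ℝ) : ℝ :=
  if t - (⌊t/h⌋:ℝ) * h ≤ δ then c1 * Sd ((t - (⌊t/h⌋:ℝ)*h)/δ)
  else c2 * Pd ((t - (⌊t/h⌋:ℝ)*h - δ)/(h-δ))

noncomputable def G2 (δ h c1 c2 : ℝ) (t : ℝ) : ℝ :=
  if t - (⌊t/h⌋:ℝ) * h ≤ δ then c1/δ * Sdd ((t - (⌊t/h⌋:ℝ)*h)/δ)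
  else c2/(h-δ) * Pdd ((t - (⌊t/h⌋:ℝ)*h - δ)/(h-δ))

section GDefs
variable {δ h c1 c2 : ℝ}

lemma floor_eq_of_mem (h0 : 0 < h) {j : ℤ} {t : ℝ}
    (h1 : (j:ℝ)*h ≤ t) (h2 : t < ((j:ℝ)+1)*h) : ⌊t/h⌋ = j := by
  rw [Int.floor_eq_iff]
  constructor
  · rw [le_div_iff₀ h0]; linarith
  · rw [div_lt_iff₀ h0]; push_cast; linarith

lemma G1_eq_S (hδ : 0 < δ) (hδh : δ < h) (j : ℤ) (t : ℝ)
    (ht : t ∈ Set.Icc ((j:ℝ)*h) ((j:ℝ)*h+δ)) :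
    G1 δ h c1 c2 t = c1 * Sd ((t - (j:ℝ)*h)/δ) := by
  have hfl : ⌊t/h⌋ = j := floor_eq_of_mem (hδ.trans hδh) ht.1 (by nlinarith [ht.2])
  have hcond : t - (⌊t/h⌋:ℝ) * h ≤ δ := by rw [hfl]; linarith [ht.2]
  rw [G1, if_pos hcond, hfl]

lemma G2_eq_S (hδ : 0 < δ) (hδh : δ < h) (j : ℤ) (t : ℝ)
    (ht : t ∈ Set.Icc ((j:ℝ)*h) ((j:ℝ)*h+δ)) :
    G2 δ h c1 c2 t = c1/δ * Sdd ((t - (j:ℝ)*h)/δ) := by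
  have hfl : ⌊t/h⌋ = j := floor_eq_of_mem (hδ.trans hδh) ht.1 (by nlinarith [ht.2])
  have hcond : t - (⌊t/h⌋:ℝ) * h ≤ δ := by rw [hfl]; linarith [ht.2]
  rw [G2, if_pos hcond, hfl]

lemma G1_eq_P (hδ : 0 < δ) (hδh : δ < h) (j : ℤ) (t : ℝ)
    (ht : t ∈ Set.Icc ((j:ℝ)*h+δ) (((j:ℝ)+1)*h)) :
    G1 δ h c1 c2 t = c2 * Pd ((t - (j:ℝ)*h - δ)/(h-δ)) := by
  have h0 : 0 < h := hδ.trans hδh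
  rcases eq_or_lt_of_le ht.2 with heq | hlt
  · -- t = (j+1)*h
    have hfl : ⌊t/h⌋ = j + 1 := by
      apply floor_eq_of_mem h0 <;> push_cast <;> nlinarith [heq]
    have hcond : t - (⌊t/h⌋:ℝ) * h ≤ δ := by
      rw [hfl]; push_cast; nlinarith [heq]
    have hv : (t - (⌊t/h⌋:ℝ)*h)/δ = 0 := by rw [hfl]; push_cast; rw [div_eq_zero_iff]; left; linarith [heq]
    have hv2 : (t - (j:ℝ)*h - δ)/(h-δ) = 1 := by
      rw [div_eq_one_iff_eq (by linarith)]; linarith [heq]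
    rw [G1, if_pos hcond, hv, hv2, Sd_zero, Pd_one, mul_zero, mul_zero]
  · have hfl : ⌊t/h⌋ = j := floor_eq_of_mem h0 (by nlinarith [ht.1]) hlt
    by_cases hcond : t - (⌊t/h⌋:ℝ) * h ≤ δ
    · -- t = j*h + δ
      have heq2 : t = (j:ℝ)*h + δ := by rw [hfl] at hcond; linarith [ht.1]
      have hv : (t - (⌊t/h⌋:ℝ)*h)/δ = 1 := by
        rw [hfl, div_eq_one_iff_eq (ne_of_gt hδ)]; linarith
      have hv2 : (t - (j:ℝ)*h - δ)/(h-δ) = 0 := by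
        rw [div_eq_zero_iff]; left; linarith
      rw [G1, if_pos hcond, hv, hv2, Sd_one, Pd_zero, mul_zero, mul_zero]
    · rw [G1, if_neg hcond, hfl]

lemma G2_eq_P (hδ : 0 < δ) (hδh : δ < h) (j : ℤ) (t : ℝ)
    (ht : t ∈ Set.Icc ((j:ℝ)*h+δ) (((j:ℝ)+1)*h)) :
    G2 δ h c1 c2 t = c2/(h-δ) * Pdd ((t - (j:ℝ)*h - δ)/(h-δ)) := by
  have h0 : 0 < h := hδ.trans hδh
  rcases eq_or_lt_of_le ht.2 with heq | hlt
  · have hfl : ⌊t/h⌋ = j + 1 := by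
      apply floor_eq_of_mem h0 <;> push_cast <;> nlinarith [heq]
    have hcond : t - (⌊t/h⌋:ℝ) * h ≤ δ := by
      rw [hfl]; push_cast; nlinarith [heq]
    have hv : (t - (⌊t/h⌋:ℝ)*h)/δ = 0 := by rw [hfl]; push_cast; rw [div_eq_zero_iff]; left; linarith [heq]
    have hv2 : (t - (j:ℝ)*h - δ)/(h-δ) = 1 := by
      rw [div_eq_one_iff_eq (by linarith)]; linarith [heq]
    rw [G2, if_pos hcond, hv, hv2, Sdd_zero, Pdd_one, mul_zero, mul_zero]
  · have hfl : ⌊t/h⌋ = j := floor_eq_of_mem h0 (by nlinarith [ht.1]) hlt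
    by_cases hcond : t - (⌊t/h⌋:ℝ) * h ≤ δ
    · have heq2 : t = (j:ℝ)*h + δ := by rw [hfl] at hcond; linarith [ht.1]
      have hv : (t - (⌊t/h⌋:ℝ)*h)/δ = 1 := by
        rw [hfl, div_eq_one_iff_eq (ne_of_gt hδ)]; linarith
      have hv2 : (t - (j:ℝ)*h - δ)/(h-δ) = 0 := by
        rw [div_eq_zero_iff]; left; linarith
      rw [G2, if_pos hcond, hv, hv2, Sdd_one, Pdd_zero, mul_zero, mul_zero]
    · rw [G2, if_neg hcond, hfl]

lemma hasDerivAt_affineS (c a b : ℝ) (hb : b ≠ 0) (t : ℝ) :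
    HasDerivAt (fun t : ℝ => c * Sd ((t - a)/b)) (c/b * Sdd ((t - a)/b)) t := by
  have h1 : HasDerivAt (fun t : ℝ => (t - a)/b) (1/b) t := by
    simpa using ((hasDerivAt_id t).sub_const a).div_const b
  have := ((hasDerivAt_Sd ((t - a)/b)).comp t h1).const_mul c
  refine this.congr_deriv ?_
  ring

lemma hasDerivAt_affineP (c a b : ℝ) (hb : b ≠ 0) (t : ℝ) :
    HasDerivAt (fun t : ℝ => c * Pd ((t - a)/b)) (c/b * Pdd ((t - a)/b)) t := by
  have h1 : HasDerivAt (fun t : ℝ => (t - a)/b) (1/b) t := by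
    simpa using ((hasDerivAt_id t).sub_const a).div_const b
  have := ((hasDerivAt_Pd ((t - a)/b)).comp t h1).const_mul c
  refine this.congr_deriv ?_
  ring

lemma hasDerivAt_G1 (hδ : 0 < δ) (hδh : δ < h) (t : ℝ) :
    HasDerivAt (G1 δ h c1 c2) (G2 δ h c1 c2 t) t := by
  apply glue_hasDerivAt hδ hδh (G1 δ h c1 c2) (G2 δ h c1 c2)
    (fun j t => c1 * Sd ((t - (j:ℝ)*h)/δ))
    (fun j t => c2 * Pd ((t - (j:ℝ)*h - δ)/(h-δ)))
  · exact fun j t ht => G1_eq_S hδ hδh j t ht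
  · intro j t ht
    have := G1_eq_P (c1 := c1) (c2 := c2) hδ hδh j t ht
    simpa [sub_sub] using this
  · intro j t ht
    rw [G2_eq_S hδ hδh j t ht]
    exact hasDerivAt_affineS c1 ((j:ℝ)*h) δ (ne_of_gt hδ) t
  · intro j t ht
    rw [G2_eq_P hδ hδh j t ht]
    have := hasDerivAt_affineP c2 ((j:ℝ)*h + δ) (h-δ) (by linarith) t
    simpa [sub_sub] using this

lemma continuousAt_G2 (hδ : 0 < δ) (hδh : δ < h) (t : ℝ) :
    ContinuousAt (G2 δ h c1 c2) t := by
  apply glue_continuousAt hδ hδh (G2 δ h c1 c2)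
    (fun j t => c1/δ * Sdd ((t - (j:ℝ)*h)/δ))
    (fun j t => c2/(h-δ) * Pdd ((t - (j:ℝ)*h - δ)/(h-δ)))
  · exact fun j t ht => G2_eq_S hδ hδh j t ht
  · exact fun j t ht => G2_eq_P hδ hδh j t ht
  · intro j
    exact continuous_const.mul (continuous_Sdd.comp ((continuous_id.sub continuous_const).div_const δ))
  · intro j
    exact continuous_const.mul (continuous_Pdd.comp (((continuous_id.sub continuous_const).sub continuous_const).div_const (h-δ)))

end GDefs

open Set Filter


section Phi
variable {δ h μ : ℝ} {φ : ℝ → ℝ}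

lemma hasDerivAt_affineSfun (c a b : ℝ) (t : ℝ) :
    HasDerivAt (fun t : ℝ => c * Sfun ((t - a)/b)) (c/b * Sd ((t - a)/b)) t := by
  have h1 : HasDerivAt (fun t : ℝ => (t - a)/b) (1/b) t := by
    simpa using ((hasDerivAt_id t).sub_const a).div_const b
  have := ((hasDerivAt_Sfun ((t - a)/b)).comp t h1).const_mul c
  refine this.congr_deriv ?_
  ring

lemma hasDerivAt_affinePfun (c a b : ℝ) (t : ℝ) :
    HasDerivAt (fun t : ℝ => c * Pfun ((t - a)/b)) (c/b * Pd ((t - a)/b)) t := by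
  have h1 : HasDerivAt (fun t : ℝ => (t - a)/b) (1/b) t := by
    simpa using ((hasDerivAt_id t).sub_const a).div_const b
  have := ((hasDerivAt_Pfun ((t - a)/b)).comp t h1).const_mul c
  refine this.congr_deriv ?_
  ring

variable (hδ : 0 < δ) (hδh : δ < h) (hμ0 : 0 < δ ^ μ) (hμh : δ ^ μ < h)
    (hφS : ∀ j : ℤ, ∀ t ∈ Set.Icc ((j : ℝ) * h) ((j : ℝ) * h + δ),
      φ t = (j : ℝ) * h + δ ^ μ * Sfun ((t - (j : ℝ) * h) / δ))
    (hφP : ∀ j : ℤ, ∀ t ∈ Set.Icc ((j : ℝ) * h + δ) (((j : ℝ) + 1) * h),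
      φ t = (j : ℝ) * h + δ ^ μ + (h - δ ^ μ) * Pfun ((t - (j : ℝ) * h - δ) / (h - δ)))

include hδ hδh hμ0 hμh hφS hφP

lemma hasDerivAt_phi (t : ℝ) :
    HasDerivAt φ (G1 δ h (δ^μ/δ) ((h-δ^μ)/(h-δ)) t) t := by
  apply glue_hasDerivAt hδ hδh φ _
    (fun j t => (j:ℝ)*h + δ^μ * Sfun ((t - (j:ℝ)*h)/δ))
    (fun j t => (j:ℝ)*h + δ^μ + (h-δ^μ) * Pfun ((t - (j:ℝ)*h - δ)/(h-δ)))
  · exact hφS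
  · exact hφP
  · intro j t ht
    rw [G1_eq_S hδ hδh j t ht]
    have := (hasDerivAt_affineSfun (δ^μ) ((j:ℝ)*h) δ t).const_add ((j:ℝ)*h)
    simpa using this
  · intro j t ht
    rw [G1_eq_P hδ hδh j t ht]
    have := (hasDerivAt_affinePfun (h-δ^μ) ((j:ℝ)*h + δ) (h-δ) t).const_add ((j:ℝ)*h + δ^μ)
    simpa [sub_sub] using this

lemma deriv_phi : deriv φ = G1 δ h (δ^μ/δ) ((h-δ^μ)/(h-δ)) :=
  funext fun t => (hasDerivAt_phi hδ hδh hμ0 hμh hφS hφP t).deriv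

lemma contDiff_phi : ContDiff ℝ 2 φ := by
  rw [show (2 : WithTop ℕ∞) = 1 + 1 from rfl, contDiff_succ_iff_deriv]
  refine ⟨fun t => (hasDerivAt_phi hδ hδh hμ0 hμh hφS hφP t).differentiableAt, ?_, ?_⟩
  · intro hω; exact absurd hω (by norm_num)
  · rw [deriv_phi hδ hδh hμ0 hμh hφS hφP, contDiff_one_iff_deriv]
    constructor
    · exact fun t => (hasDerivAt_G1 hδ hδh t).differentiableAt
    · have : deriv (G1 δ h (δ^μ/δ) ((h-δ^μ)/(h-δ))) = G2 δ h (δ^μ/δ) ((h-δ^μ)/(h-δ)) :=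
        funext fun t => (hasDerivAt_G1 hδ hδh t).deriv
      rw [this]
      exact continuous_iff_continuousAt.2 (fun t => continuousAt_G2 hδ hδh t)

lemma strictMono_phi : StrictMono φ := by
  have hc1 : 0 < δ^μ/δ := div_pos hμ0 hδ
  have hc2 : 0 < (h-δ^μ)/(h-δ) := div_pos (by linarith) (by linarith)
  have hder := hasDerivAt_phi hδ hδh hμ0 hμh hφS hφP
  have hdiff : Differentiable ℝ φ := fun t => (hder t).differentiableAt
  have hmono : Monotone φ := by
    apply monotone_of_deriv_nonneg hdiff
    intro t
    rw [deriv_phi hδ hδh hμ0 hμh hφS hφP]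
    obtain ⟨h1, h2⟩ := floor_bounds (hδ.trans hδh) t
    rcases le_or_gt (t - (⌊t/h⌋:ℝ)*h) δ with hc | hc
    · rw [G1_eq_S hδ hδh ⌊t/h⌋ t ⟨h1, by linarith⟩]
      exact mul_nonneg hc1.le (Sd_nonneg _)
    · rw [G1_eq_P hδ hδh ⌊t/h⌋ t ⟨by linarith, h2.le⟩]
      exact mul_nonneg hc2.le (Pd_nonneg _)
  intro x y hxy
  obtain ⟨h1, h2⟩ := floor_bounds (hδ.trans hδh) x
  set j := ⌊x/h⌋ with hj
  rcases lt_or_ge x ((j:ℝ)*h + δ) with hc | hc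
  · set b := min y ((j:ℝ)*h + δ) with hb
    have hxb : x < b := lt_min hxy hc
    have hsm : StrictMonoOn φ (Set.Icc x b) := by
      apply strictMonoOn_of_deriv_pos (convex_Icc x b) hdiff.continuous.continuousOn
      intro t ht
      rw [interior_Icc] at ht
      have ht1 : (j:ℝ)*h < t := lt_of_le_of_lt h1 ht.1
      have ht2 : t < (j:ℝ)*h + δ := lt_of_lt_of_le ht.2 (min_le_right _ _)
      rw [deriv_phi hδ hδh hμ0 hμh hφS hφP,
        G1_eq_S hδ hδh j t ⟨by linarith, by linarith⟩]
      exact mul_pos hc1 (Sd_pos (div_pos (by linarith) hδ) (by rw [div_lt_one hδ]; linarith))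
    have : φ x < φ b := hsm ⟨le_refl x, hxb.le⟩ ⟨hxb.le, le_refl b⟩ hxb
    exact lt_of_lt_of_le this (hmono (min_le_left _ _))
  · set b := min y (((j:ℝ)+1)*h) with hb
    have hxb : x < b := lt_min hxy h2
    have hsm : StrictMonoOn φ (Set.Icc x b) := by
      apply strictMonoOn_of_deriv_pos (convex_Icc x b) hdiff.continuous.continuousOn
      intro t ht
      rw [interior_Icc] at ht
      have ht1 : (j:ℝ)*h + δ < t := lt_of_le_of_lt hc ht.1
      have ht2 : t < ((j:ℝ)+1)*h := lt_of_lt_of_le ht.2 (min_le_right _ _)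
      rw [deriv_phi hδ hδh hμ0 hμh hφS hφP,
        G1_eq_P hδ hδh j t ⟨by linarith, by linarith⟩]
      refine mul_pos hc2 (Pd_pos ?_ ?_)
      · apply div_pos (by linarith) (by linarith)
      · rw [div_lt_one (by linarith)]; linarith
    have : φ x < φ b := hsm ⟨le_refl x, hxb.le⟩ ⟨hxb.le, le_refl b⟩ hxb
    exact lt_of_lt_of_le this (hmono (min_le_left _ _))

omit hδh hμ0 hμh in
lemma phi_step (hδh : δ < h) (t : ℝ) : φ (t + h) = φ t + h := by
  have h0 : 0 < h := hδ.trans hδh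
  obtain ⟨h1, h2⟩ := floor_bounds h0 t
  set j := ⌊t/h⌋ with hj
  rcases le_or_gt t ((j:ℝ)*h + δ) with hc | hc
  · have e1 := hφS j t ⟨h1, hc⟩
    have e2 := hφS (j+1) (t+h) (by constructor <;> push_cast <;> linarith)
    push_cast at e2
    rw [e1, e2]
    have : (t + h - ((j:ℝ)+1)*h) = t - (j:ℝ)*h := by ring
    rw [this]; ring
  · have e1 := hφP j t ⟨hc.le, h2.le⟩
    have e2 := hφP (j+1) (t+h) (by constructor <;> push_cast <;> linarith)
    push_cast at e2
    rw [e1, e2]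
    have : (t + h - ((j:ℝ)+1)*h - δ) = t - (j:ℝ)*h - δ := by ring
    rw [this]; ring

omit hδh hμ0 hμh in
lemma phi_add_nat (hδh : δ < h) (n : ℕ) (t : ℝ) : φ (t + n*h) = φ t + n*h := by
  induction n with
  | zero => simp
  | succ n ih =>
    have : t + ((n:ℝ)+1)*h = (t + n*h) + h := by ring
    push_cast
    rw [this, phi_step hδ hφS hφP hδh, ih]
    ring

end Phi

end StmtAux

/-- the inner functions ψ_q are C², strictly increasing, and map [0,1] onto [0,1]. -/
theorem psi_smooth_strictMono_onto
    (N : ℕ) (hN : 2 ≤ N) (δ : ℝ) (hδ : 0 < δ) (μ : ℝ) (hμ : 0 < μ)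
    (h : ℝ) (hh : h = (N : ℝ) * δ)
    (φ : ℝ → ℝ)
    (hφS : ∀ j : ℤ, ∀ t ∈ Set.Icc ((j : ℝ) * h) ((j : ℝ) * h + δ),
      φ t = (j : ℝ) * h + δ ^ μ * Sfun ((t - (j : ℝ) * h) / δ))
    (hφP : ∀ j : ℤ, ∀ t ∈ Set.Icc ((j : ℝ) * h + δ) (((j : ℝ) + 1) * h),
      φ t = (j : ℝ) * h + δ ^ μ + (h - δ ^ μ) * Pfun ((t - (j : ℝ) * h - δ) / (h - δ)))
    (J : ℕ) (hJ : 0 < J) (hJh : (J : ℝ) * h = 1)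
    (hlt : δ ^ μ < h) :
    ∀ q : ℕ, 1 ≤ q → q ≤ N →
      ContDiffOn ℝ 2 (psi φ δ q) (Set.Icc 0 1) ∧
      StrictMonoOn (psi φ δ q) (Set.Icc 0 1) ∧
      psi φ δ q 0 = 0 ∧ psi φ δ q 1 = 1 ∧
      (psi φ δ q) '' Set.Icc 0 1 = Set.Icc 0 1 := by
  intro q hq1 hq2
  have hN2 : (2:ℝ) ≤ (N:ℝ) := by exact_mod_cast hN
  have hδh : δ < h := by rw [hh]; nlinarith
  have hμ0 : 0 < δ ^ μ := Real.rpow_pos_of_pos hδ μ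
  have hC2 : ContDiff ℝ 2 φ := StmtAux.contDiff_phi hδ hδh hμ0 hlt hφS hφP
  have hSM : StrictMono φ := StmtAux.strictMono_phi hδ hδh hμ0 hlt hφS hφP
  set s : ℝ := (1 - (q:ℝ)) * δ with hs
  have hψC2 : ContDiff ℝ 2 (psi φ δ q) := by
    unfold psi
    exact (hC2.comp (contDiff_id.add contDiff_const)).sub contDiff_const
  have hψSM : StrictMono (psi φ δ q) := by
    intro a b hab
    unfold psi
    exact sub_lt_sub_right (hSM (by linarith)) _
  have h0 : psi φ δ q 0 = 0 := by unfold psi; rw [zero_add, sub_self]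
  have h1 : psi φ δ q 1 = 1 := by
    unfold psi
    have hper := StmtAux.phi_add_nat hδ hφS hφP hδh J s
    rw [hJh] at hper
    rw [show (1:ℝ) + s = s + 1 by ring] at *
    rw [hper]; ring
  refine ⟨hψC2.contDiffOn, hψSM.strictMonoOn _, h0, h1, ?_⟩
  apply Set.Subset.antisymm
  · rintro _ ⟨x, hx, rfl⟩
    constructor
    · rw [← h0]; exact hψSM.monotone hx.1
    · rw [← h1]; exact hψSM.monotone hx.2
  · have := intermediate_value_Icc (by norm_num : (0:ℝ) ≤ 1) hψC2.continuous.continuousOn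
    rw [h0, h1] at this
    exact this
end
end

section
/- Assume h ≥ δ^μ. Then for each q ∈ {1,…,N} and every x ∈ [0,1], one has 0 ≤ ψ_q′(x) ≤ max{ 2 δ^{μ−1}, (15/8)·(h − δ^μ)/(h − δ) } and |ψ_q″(x)| ≤ max{ 2π δ^{μ−2}, (10/√3)·(h − δ^μ)/(h − δ)² }. -/
noncomputable section

/-- Piecewise combination of two families of functions by position modulo `h`. -/
def pwD (h δ : ℝ) (A B : ℤ → ℝ → ℝ) (t : ℝ) : ℝ :=
  if t - (⌊t / h⌋ : ℝ) * h ≤ δ then A ⌊t / h⌋ t else B ⌊t / h⌋ t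

lemma floor_eq_of_mem {h δ : ℝ} (hδ : 0 < δ) (hδh : δ < h) {j : ℤ} {t : ℝ}
    (h1 : (j : ℝ) * h ≤ t) (h2 : t < ((j : ℝ) + 1) * h) : ⌊t / h⌋ = j := by
  have h0 : (0:ℝ) < h := hδ.trans hδh
  rw [Int.floor_eq_iff]
  constructor
  · rw [le_div_iff₀ h0]; linarith
  · rw [div_lt_iff₀ h0]; push_cast; linarith

lemma pwD_eqA {h δ : ℝ} (hδ : 0 < δ) (hδh : δ < h) (A B : ℤ → ℝ → ℝ) (j : ℤ) (t : ℝ)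
    (ht : t ∈ Set.Icc ((j : ℝ) * h) ((j : ℝ) * h + δ)) : pwD h δ A B t = A j t := by
  have hfl : ⌊t / h⌋ = j := floor_eq_of_mem hδ hδh ht.1 (by
    have := ht.2; linarith)
  rw [pwD, hfl, if_pos (by linarith [ht.2])]

lemma pwD_eqB {h δ : ℝ} (hδ : 0 < δ) (hδh : δ < h) (A B : ℤ → ℝ → ℝ)
    (hmatch0 : ∀ j : ℤ, A j ((j : ℝ) * h) = B (j - 1) ((j : ℝ) * h))
    (hmatch1 : ∀ j : ℤ, A j ((j : ℝ) * h + δ) = B j ((j : ℝ) * h + δ))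
    (j : ℤ) (t : ℝ)
    (ht : t ∈ Set.Icc ((j : ℝ) * h + δ) (((j : ℝ) + 1) * h)) : pwD h δ A B t = B j t := by
  rcases eq_or_lt_of_le ht.2 with hE | hlt
  · -- t = (j+1) h
    have hfl : ⌊t / h⌋ = j + 1 := floor_eq_of_mem hδ hδh (by push_cast; linarith [hE]) (by
      push_cast; nlinarith [hδ.trans hδh, hE.le])
    rw [pwD, hfl, if_pos (by push_cast; linarith [hE])]
    have h2 := hmatch0 (j + 1)
    simp only [add_sub_cancel_right] at h2
    have hc : ((j + 1 : ℤ) : ℝ) * h = t := by push_cast; linarith [hE]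
    rw [hc] at h2
    exact h2
  · have hfl : ⌊t / h⌋ = j := floor_eq_of_mem hδ hδh (by linarith [ht.1]) hlt
    rcases eq_or_lt_of_le ht.1 with hE | hlt2
    · rw [pwD, hfl, if_pos (by linarith [hE.le])]
      rw [← hE]; exact hmatch1 j
    · rw [pwD, hfl, if_neg (by linarith)]

/-- The main piecewise differentiation lemma. -/
lemma pw_hasDerivAt {h δ : ℝ} (hδ : 0 < δ) (hδh : δ < h)
    (f : ℝ → ℝ) (A B A' B' : ℤ → ℝ → ℝ)
    (hA : ∀ j t, HasDerivAt (A j) (A' j t) t)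
    (hB : ∀ j t, HasDerivAt (B j) (B' j t) t)
    (hfA : ∀ j : ℤ, ∀ t ∈ Set.Icc ((j : ℝ) * h) ((j : ℝ) * h + δ), f t = A j t)
    (hfB : ∀ j : ℤ, ∀ t ∈ Set.Icc ((j : ℝ) * h + δ) (((j : ℝ) + 1) * h), f t = B j t)
    (hmatch0 : ∀ j : ℤ, A' j ((j : ℝ) * h) = B' (j - 1) ((j : ℝ) * h))
    (hmatch1 : ∀ j : ℤ, A' j ((j : ℝ) * h + δ) = B' j ((j : ℝ) * h + δ))
    (t : ℝ) :
    HasDerivAt f (pwD h δ A' B' t) t := by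
  have h0 : (0:ℝ) < h := hδ.trans hδh
  set j : ℤ := ⌊t / h⌋ with hj
  have hjt : (j : ℝ) * h ≤ t := by
    have h1 : (j : ℝ) ≤ t / h := Int.floor_le _
    rw [le_div_iff₀ h0] at h1; exact h1
  have htj : t < ((j : ℝ) + 1) * h := by
    have h1 : t / h < (j : ℝ) + 1 := by rw [hj]; exact_mod_cast Int.lt_floor_add_one (t / h)
    rw [div_lt_iff₀ h0] at h1; exact h1
  have hBjm : ∀ t' ∈ Set.Icc (((j:ℝ) - 1) * h + δ) ((j:ℝ) * h), f t' = B (j - 1) t' := by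
    intro t' ht'
    have := hfB (j - 1) t' (by push_cast; push_cast at ht'; exact ⟨by linarith [ht'.1], by linarith [ht'.2]⟩)
    exact this
  rcases eq_or_lt_of_le hjt with hE | hlt
  · -- junction t = j h
    have hval : pwD h δ A' B' t = A' j t :=
      pwD_eqA hδ hδh A' B' j t ⟨hjt, by linarith⟩
    rw [hval]
    have hright : HasDerivWithinAt f (A' j t) (Set.Ici t) t := by
      have h1 : HasDerivWithinAt (A j) (A' j t) (Set.Icc ((j:ℝ)*h) ((j:ℝ)*h + δ)) t :=
        (hA j t).hasDerivWithinAt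
      have h2 := h1.congr (fun y hy => hfA j y hy) (hfA j t ⟨hjt, by linarith⟩)
      exact h2.mono_of_mem_nhdsWithin (by
        rw [hE]; exact Icc_mem_nhdsGE (by linarith))
    have hleft : HasDerivWithinAt f (A' j t) (Set.Iic t) t := by
      have hBv : A' j t = B' (j - 1) t := by rw [← hE]; exact hmatch0 j
      rw [hBv]
      have h1 : HasDerivWithinAt (B (j-1)) (B' (j-1) t)
          (Set.Icc (((j:ℝ) - 1) * h + δ) ((j:ℝ) * h)) t := (hB (j-1) t).hasDerivWithinAt
      have h2 := h1.congr (fun y hy => hBjm y hy) (hBjm t ⟨by linarith, hE.ge⟩)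
      exact h2.mono_of_mem_nhdsWithin (by
        rw [hE]; exact Icc_mem_nhdsLE (by linarith))
    exact hasDerivWithinAt_univ.mp (by
      simpa [Set.Iic_union_Ici] using hleft.union hright)
  · rcases lt_trichotomy t ((j : ℝ) * h + δ) with h1 | h1 | h1
    · -- interior of A piece
      rw [pwD_eqA hδ hδh A' B' j t ⟨hjt, h1.le⟩]
      exact (hA j t).congr_of_eventuallyEq (Filter.eventuallyEq_of_mem
        (Ioo_mem_nhds hlt h1) (fun y hy => hfA j y ⟨hy.1.le, hy.2.le⟩))
    · -- junction t = j h + δ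
      rw [pwD_eqA hδ hδh A' B' j t ⟨hjt, h1.le⟩]
      have hleft : HasDerivWithinAt f (A' j t) (Set.Iic t) t := by
        have h2 := ((hA j t).hasDerivWithinAt (s := Set.Icc ((j:ℝ)*h) ((j:ℝ)*h + δ))).congr
          (fun y hy => hfA j y hy) (hfA j t ⟨hjt, h1.le⟩)
        exact h2.mono_of_mem_nhdsWithin (by
          rw [h1]; exact Icc_mem_nhdsLE (by linarith))
      have hright : HasDerivWithinAt f (A' j t) (Set.Ici t) t := by
        have hBv : A' j t = B' j t := by rw [h1]; exact hmatch1 j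
        rw [hBv]
        have h2 := ((hB j t).hasDerivWithinAt
            (s := Set.Icc ((j:ℝ)*h + δ) (((j:ℝ) + 1) * h))).congr
          (fun y hy => hfB j y hy) (hfB j t ⟨h1.ge, htj.le⟩)
        exact h2.mono_of_mem_nhdsWithin (by
          rw [h1]; exact Icc_mem_nhdsGE (by linarith))
      exact hasDerivWithinAt_univ.mp (by
        simpa [Set.Iic_union_Ici] using hleft.union hright)
    · -- interior of B piece
      rw [pwD_eqB hδ hδh A' B' hmatch0 hmatch1 j t ⟨h1.le, htj.le⟩]
      exact (hB j t).congr_of_eventuallyEq (Filter.eventuallyEq_of_mem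
        (Ioo_mem_nhds h1 htj) (fun y hy => hfB j y ⟨hy.1.le, hy.2.le⟩))


def fA (h δ μ : ℝ) (j : ℤ) (t : ℝ) : ℝ := (j:ℝ)*h + δ^μ * Sfun ((t - (j:ℝ)*h)/δ)
def fB (h δ μ : ℝ) (j : ℤ) (t : ℝ) : ℝ :=
  (j:ℝ)*h + δ^μ + (h - δ^μ) * Pfun ((t - (j:ℝ)*h - δ)/(h-δ))
def fA' (h δ μ : ℝ) (j : ℤ) (t : ℝ) : ℝ :=
  δ^μ/δ * (1 - Real.cos (2*Real.pi*((t - (j:ℝ)*h)/δ)))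
def fB' (h δ μ : ℝ) (j : ℤ) (t : ℝ) : ℝ :=
  (h - δ^μ)/(h-δ) * (30 * ((t - (j:ℝ)*h - δ)/(h-δ))^2 * ((t - (j:ℝ)*h - δ)/(h-δ) - 1)^2)
def fA'' (h δ μ : ℝ) (j : ℤ) (t : ℝ) : ℝ :=
  δ^μ/δ * (2*Real.pi/δ * Real.sin (2*Real.pi*((t - (j:ℝ)*h)/δ)))
def fB'' (h δ μ : ℝ) (j : ℤ) (t : ℝ) : ℝ :=
  (h - δ^μ)/(h-δ)^2 * (60 * ((t - (j:ℝ)*h - δ)/(h-δ)) * ((t - (j:ℝ)*h - δ)/(h-δ) - 1)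
    * (2*((t - (j:ℝ)*h - δ)/(h-δ)) - 1))

lemma hasDerivAt_u {c δ : ℝ} (hδ : δ ≠ 0) (t : ℝ) :
    HasDerivAt (fun t : ℝ => (t - c)/δ) (1/δ) t := by
  simpa using ((hasDerivAt_id t).sub_const c).div_const δ

lemma hasDerivAt_u2 (c₁ c₂ d : ℝ) (t : ℝ) :
    HasDerivAt (fun t : ℝ => (t - c₁ - c₂)/d) (1/d) t := by
  simpa using (((hasDerivAt_id t).sub_const c₁).sub_const c₂).div_const d

lemma fA_deriv {h δ μ : ℝ} (hδ : 0 < δ) (j : ℤ) (t : ℝ) :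
    HasDerivAt (fA h δ μ j) (fA' h δ μ j t) t := by
  have hu := hasDerivAt_u (c := (j:ℝ)*h) hδ.ne' t
  have h2 : HasDerivAt (fun t : ℝ => 2*Real.pi*((t - (j:ℝ)*h)/δ)) (2*Real.pi*(1/δ)) t :=
    hu.const_mul _
  have h3 : HasDerivAt (fun t : ℝ => Real.sin (2*Real.pi*((t - (j:ℝ)*h)/δ)))
      (Real.cos (2*Real.pi*((t - (j:ℝ)*h)/δ)) * (2*Real.pi*(1/δ))) t :=
    (Real.hasDerivAt_sin _).comp t h2
  have h4 : HasDerivAt (fun t : ℝ => Sfun ((t - (j:ℝ)*h)/δ))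
      (1/δ - Real.cos (2*Real.pi*((t - (j:ℝ)*h)/δ)) * (2*Real.pi*(1/δ)) / (2*Real.pi)) t := by
    simp only [Sfun]
    exact hu.sub (h3.div_const _)
  have h5 := (h4.const_mul (δ^μ)).const_add ((j:ℝ)*h)
  have h6 : fA h δ μ j = fun t => (j:ℝ)*h + δ^μ * Sfun ((t - (j:ℝ)*h)/δ) := rfl
  rw [fA'] ; rw [show fA h δ μ j = fun t => (j:ℝ)*h + δ^μ * Sfun ((t - (j:ℝ)*h)/δ) from rfl]
  refine h5.congr_deriv ?_
  have hπ := Real.pi_ne_zero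
  field_simp

lemma fB_deriv {h δ μ : ℝ} (hδh : δ < h) (j : ℤ) (t : ℝ) :
    HasDerivAt (fB h δ μ j) (fB' h δ μ j t) t := by
  have hu := hasDerivAt_u2 ((j:ℝ)*h) δ (h-δ) t
  set w : ℝ := (t - (j:ℝ)*h - δ)/(h-δ) with hw
  have hP : HasDerivAt Pfun (3*w^2*(6*w^2 - 15*w + 10) + w^3*(6*(2*w) - 15)) w := by
    have := (hasDerivAt_pow 3 w).mul
      ((((hasDerivAt_pow 2 w).const_mul 6).sub ((hasDerivAt_id w).const_mul 15)).add_const 10)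
    show HasDerivAt (fun z : ℝ => z ^ 3 * (6 * z ^ 2 - 15 * z + 10)) _ w
    simpa [Pfun, id_eq, Pi.mul_def, Pi.sub_def] using this.congr_deriv (by simp only [id_eq, Pi.sub_apply]; push_cast; ring)
  have hcomp : HasDerivAt (fun t : ℝ => Pfun ((t - (j:ℝ)*h - δ)/(h-δ)))
      ((3*w^2*(6*w^2 - 15*w + 10) + w^3*(6*(2*w) - 15)) * (1/(h-δ))) t :=
    by have := hP.comp t hu; exact this
  have h5 := ((hcomp.const_mul (h - δ^μ)).const_add ((j:ℝ)*h + δ^μ))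
  rw [show fB h δ μ j = fun t => (j:ℝ)*h + δ^μ + (h - δ^μ) * Pfun ((t - (j:ℝ)*h - δ)/(h-δ)) from rfl]
  refine h5.congr_deriv ?_
  rw [fB', ← hw]
  clear_value w
  ring

lemma fA'_deriv {h δ μ : ℝ} (hδ : 0 < δ) (j : ℤ) (t : ℝ) :
    HasDerivAt (fA' h δ μ j) (fA'' h δ μ j t) t := by
  have hu := hasDerivAt_u (c := (j:ℝ)*h) hδ.ne' t
  have h2 : HasDerivAt (fun t : ℝ => 2*Real.pi*((t - (j:ℝ)*h)/δ)) (2*Real.pi*(1/δ)) t :=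
    hu.const_mul _
  have h3 : HasDerivAt (fun t : ℝ => Real.cos (2*Real.pi*((t - (j:ℝ)*h)/δ)))
      (-Real.sin (2*Real.pi*((t - (j:ℝ)*h)/δ)) * (2*Real.pi*(1/δ))) t :=
    (Real.hasDerivAt_cos _).comp t h2
  have h4 := (h3.const_sub 1).const_mul (δ^μ/δ)
  rw [show fA' h δ μ j = fun t => δ^μ/δ * (1 - Real.cos (2*Real.pi*((t - (j:ℝ)*h)/δ))) from rfl]
  refine h4.congr_deriv ?_
  rw [fA'']
  ring

lemma fB'_deriv {h δ μ : ℝ} (hδh : δ < h) (j : ℤ) (t : ℝ) :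
    HasDerivAt (fB' h δ μ j) (fB'' h δ μ j t) t := by
  have hne : h - δ ≠ 0 := by linarith
  have hu := hasDerivAt_u2 ((j:ℝ)*h) δ (h-δ) t
  set w : ℝ := (t - (j:ℝ)*h - δ)/(h-δ) with hw
  have hg : HasDerivAt (fun w : ℝ => 30 * w^2 * (w - 1)^2)
      (60*w*(w-1)^2 + 30*w^2*(2*(w-1))) w := by
    have := ((hasDerivAt_pow 2 w).const_mul 30).mul (((hasDerivAt_id w).sub_const 1).pow 2)
    simpa [id_eq, Pi.mul_def, Pi.pow_def] using this.congr_deriv (by simp only [id_eq, Pi.pow_apply]; push_cast; ring)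
  have hcomp : HasDerivAt (fun t : ℝ => 30 * ((t - (j:ℝ)*h - δ)/(h-δ))^2 * ((t - (j:ℝ)*h - δ)/(h-δ) - 1)^2)
      ((60*w*(w-1)^2 + 30*w^2*(2*(w-1))) * (1/(h-δ))) t := by
    have := hg.comp t hu; exact this
  have h5 := hcomp.const_mul ((h - δ^μ)/(h-δ))
  rw [show fB' h δ μ j = fun t => (h - δ^μ)/(h-δ) * (30 * ((t - (j:ℝ)*h - δ)/(h-δ))^2 * ((t - (j:ℝ)*h - δ)/(h-δ) - 1)^2) from rfl]
  refine h5.congr_deriv ?_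
  rw [fB'', ← hw]
  clear_value w
  field_simp
  ring

lemma fA'_left (h δ μ : ℝ) (j : ℤ) : fA' h δ μ j ((j:ℝ)*h) = 0 := by
  simp [fA']

lemma fA'_right {δ : ℝ} (h μ : ℝ) (hδ : δ ≠ 0) (j : ℤ) : fA' h δ μ j ((j:ℝ)*h + δ) = 0 := by
  rw [fA', show ((j:ℝ)*h + δ - (j:ℝ)*h) = δ by ring, div_self hδ, mul_one, Real.cos_two_pi]
  ring

lemma fB'_right (h δ μ : ℝ) (j : ℤ) : fB' h δ μ j ((j:ℝ)*h + δ) = 0 := by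
  have : ((j:ℝ)*h + δ - (j:ℝ)*h - δ) = 0 := by ring
  simp [fB', this]

lemma fB'_left {h δ : ℝ} (μ : ℝ) (hne : h - δ ≠ 0) (j : ℤ) :
    fB' h δ μ (j - 1) ((j:ℝ)*h) = 0 := by
  rw [fB', show ((j:ℝ)*h - ((j - 1 : ℤ):ℝ)*h - δ)/(h-δ) = 1 by
    push_cast; rw [show ((j:ℝ)*h - ((j:ℝ) - 1)*h - δ) = h - δ by ring, div_self hne]]
  norm_num

lemma fA''_left (h δ μ : ℝ) (j : ℤ) : fA'' h δ μ j ((j:ℝ)*h) = 0 := by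
  simp [fA'']

lemma fA''_right {δ : ℝ} (h μ : ℝ) (hδ : δ ≠ 0) (j : ℤ) : fA'' h δ μ j ((j:ℝ)*h + δ) = 0 := by
  rw [fA'', show ((j:ℝ)*h + δ - (j:ℝ)*h) = δ by ring, div_self hδ, mul_one, Real.sin_two_pi]
  ring

lemma fB''_right (h δ μ : ℝ) (j : ℤ) : fB'' h δ μ j ((j:ℝ)*h + δ) = 0 := by
  have : ((j:ℝ)*h + δ - (j:ℝ)*h - δ) = 0 := by ring
  simp [fB'', this]

lemma fB''_left {h δ : ℝ} (μ : ℝ) (hne : h - δ ≠ 0) (j : ℤ) :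
    fB'' h δ μ (j - 1) ((j:ℝ)*h) = 0 := by
  rw [fB'', show ((j:ℝ)*h - ((j - 1 : ℤ):ℝ)*h - δ)/(h-δ) = 1 by
    push_cast; rw [show ((j:ℝ)*h - ((j:ℝ) - 1)*h - δ) = h - δ by ring, div_self hne]]
  norm_num

lemma floor_bounds {h : ℝ} (h0 : 0 < h) (t : ℝ) :
    (⌊t/h⌋ : ℝ) * h ≤ t ∧ t < ((⌊t/h⌋ : ℝ) + 1) * h := by
  constructor
  · have h1 : (⌊t/h⌋ : ℝ) ≤ t / h := Int.floor_le _
    rw [le_div_iff₀ h0] at h1; exact h1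
  · have h1 : t / h < (⌊t/h⌋ : ℝ) + 1 := by exact_mod_cast Int.lt_floor_add_one (t/h)
    rw [div_lt_iff₀ h0] at h1; exact h1

lemma pwD1_bounds {h δ μ : ℝ} (hδ : 0 < δ) (hδh : δ < h) (hle : δ^μ ≤ h) (t : ℝ) :
    0 ≤ pwD h δ (fA' h δ μ) (fB' h δ μ) t ∧
    pwD h δ (fA' h δ μ) (fB' h δ μ) t ≤ max (2 * δ ^ (μ - 1)) ((15/8) * (h - δ^μ) / (h - δ)) := by
  have h0 : (0:ℝ) < h := hδ.trans hδh
  obtain ⟨hjt, htj⟩ := floor_bounds h0 t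
  have hδμ : (0:ℝ) ≤ δ^μ := Real.rpow_nonneg hδ.le μ
  rw [pwD]
  split_ifs with hc
  · -- A branch
    set θ : ℝ := 2*Real.pi*((t - (⌊t/h⌋:ℝ)*h)/δ) with hθ
    have hcos1 := Real.neg_one_le_cos θ
    have hcos2 := Real.cos_le_one θ
    have hq : (0:ℝ) ≤ δ^μ/δ := div_nonneg hδμ hδ.le
    constructor
    · rw [fA', ← hθ]
      exact mul_nonneg hq (by linarith)
    · refine le_trans ?_ (le_max_left _ _)
      rw [fA', ← hθ, Real.rpow_sub_one hδ.ne' μ] at *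
      nlinarith
  · -- B branch
    push_neg at hc
    set w : ℝ := (t - (⌊t/h⌋:ℝ)*h - δ)/(h-δ) with hw
    have hne : (0:ℝ) < h - δ := by linarith
    have hw0 : 0 ≤ w := div_nonneg (by linarith) hne.le
    have hw1 : w ≤ 1 := by
      rw [hw, div_le_one hne]; linarith
    have hC : (0:ℝ) ≤ (h - δ^μ)/(h-δ) := div_nonneg (by linarith) hne.le
    have hkey : 30 * w^2 * (w - 1)^2 ≤ 15/8 := by
      have h1 : 0 ≤ w*(1-w) := mul_nonneg hw0 (by linarith)
      nlinarith [sq_nonneg (w - 1/2), mul_nonneg (sq_nonneg (w - 1/2)) h1]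
    constructor
    · rw [fB', ← hw]
      positivity
    · refine le_trans ?_ (le_max_right _ _)
      rw [fB', ← hw]
      calc (h - δ^μ)/(h-δ) * (30 * w^2 * (w - 1)^2) ≤ (h - δ^μ)/(h-δ) * (15/8) :=
            mul_le_mul_of_nonneg_left hkey hC
        _ = 15/8 * (h - δ^μ) / (h-δ) := by ring

lemma pwD2_bound {h δ μ : ℝ} (hδ : 0 < δ) (hδh : δ < h) (hle : δ^μ ≤ h) (t : ℝ) :
    |pwD h δ (fA'' h δ μ) (fB'' h δ μ) t| ≤
      max (2 * Real.pi * δ ^ (μ - 2)) ((10 / Real.sqrt 3) * (h - δ^μ) / (h - δ)^2) := by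
  have h0 : (0:ℝ) < h := hδ.trans hδh
  obtain ⟨hjt, htj⟩ := floor_bounds h0 t
  have hδμ : (0:ℝ) ≤ δ^μ := Real.rpow_nonneg hδ.le μ
  have hπ := Real.pi_pos
  rw [pwD]
  split_ifs with hc
  · -- A branch
    refine le_trans ?_ (le_max_left _ _)
    set θ : ℝ := 2*Real.pi*((t - (⌊t/h⌋:ℝ)*h)/δ) with hθ
    rw [fA'', ← hθ]
    have h1 : |δ^μ/δ * (2*Real.pi/δ * Real.sin θ)|
        = δ^μ/δ * (2*Real.pi/δ) * |Real.sin θ| := by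
      rw [abs_mul, abs_mul, abs_of_nonneg (div_nonneg hδμ hδ.le),
        abs_of_nonneg (by positivity : (0:ℝ) ≤ 2*Real.pi/δ), mul_assoc]
    rw [h1]
    have h2 : δ^μ/δ * (2*Real.pi/δ) * |Real.sin θ| ≤ δ^μ/δ * (2*Real.pi/δ) * 1 :=
      mul_le_mul_of_nonneg_left (Real.abs_sin_le_one θ) (by positivity)
    refine h2.trans (le_of_eq ?_)
    rw [show (μ - 2 : ℝ) = μ - ((2:ℕ):ℝ) by norm_num, Real.rpow_sub hδ, Real.rpow_natCast]
    field_simp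
  · -- B branch
    push_neg at hc
    refine le_trans ?_ (le_max_right _ _)
    set w : ℝ := (t - (⌊t/h⌋:ℝ)*h - δ)/(h-δ) with hw
    have hne : (0:ℝ) < h - δ := by linarith
    have hw0 : 0 ≤ w := div_nonneg (by linarith) hne.le
    have hw1 : w ≤ 1 := by rw [hw, div_le_one hne]; linarith
    have hC : (0:ℝ) ≤ (h - δ^μ)/(h-δ)^2 := div_nonneg (by linarith) (by positivity)
    have hs3 : (0:ℝ) < Real.sqrt 3 := Real.sqrt_pos.mpr (by norm_num)
    have hsq : ((10:ℝ)/Real.sqrt 3)^2 = 100/3 := by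
      rw [div_pow, Real.sq_sqrt (by norm_num : (3:ℝ) ≥ 0)]
      norm_num
    have hkey : |60 * w * (w - 1) * (2*w - 1)| ≤ 10/Real.sqrt 3 := by
      have h1 : 0 ≤ w*(1-w) := mul_nonneg hw0 (by linarith)
      have h2 : (60 * w * (w - 1) * (2*w - 1))^2 ≤ 100/3 := by
        nlinarith [sq_nonneg (6*(w*(1-w)) - 1),
          mul_nonneg (sq_nonneg (6*(w*(1-w)) - 1)) h1]
      have h3 : (0:ℝ) ≤ 10/Real.sqrt 3 := by positivity
      rw [← Real.sqrt_sq_eq_abs]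
      rw [show (100:ℝ)/3 = (10/Real.sqrt 3)^2 from hsq.symm] at h2
      calc Real.sqrt ((60 * w * (w - 1) * (2*w - 1))^2) ≤ Real.sqrt ((10/Real.sqrt 3)^2) :=
            Real.sqrt_le_sqrt h2
        _ = 10/Real.sqrt 3 := Real.sqrt_sq h3
    rw [fB'', ← hw, abs_mul, abs_of_nonneg hC]
    calc (h - δ^μ)/(h-δ)^2 * |60 * w * (w - 1) * (2*w - 1)|
        ≤ (h - δ^μ)/(h-δ)^2 * (10/Real.sqrt 3) := mul_le_mul_of_nonneg_left hkey hC
      _ = 10/Real.sqrt 3 * (h - δ^μ) / (h-δ)^2 := by ring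

/-- derivative bounds for the inner functions ψ_q on [0,1]. -/
theorem psi_derivative_bounds
    (N : ℕ) (hN : 2 ≤ N) (δ : ℝ) (hδ : 0 < δ) (μ : ℝ) (hμ : 0 < μ)
    (h : ℝ) (hh : h = (N : ℝ) * δ)
    (φ : ℝ → ℝ)
    (hφS : ∀ j : ℤ, ∀ t ∈ Set.Icc ((j : ℝ) * h) ((j : ℝ) * h + δ),
      φ t = (j : ℝ) * h + δ ^ μ * Sfun ((t - (j : ℝ) * h) / δ))
    (hφP : ∀ j : ℤ, ∀ t ∈ Set.Icc ((j : ℝ) * h + δ) (((j : ℝ) + 1) * h),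
      φ t = (j : ℝ) * h + δ ^ μ + (h - δ ^ μ) * Pfun ((t - (j : ℝ) * h - δ) / (h - δ)))
    (J : ℕ) (hJ : 0 < J) (hJh : (J : ℝ) * h = 1)
    (hle : δ ^ μ ≤ h) :
    ∀ q : ℕ, 1 ≤ q → q ≤ N → ∀ x ∈ Set.Icc (0 : ℝ) 1,
      0 ≤ deriv (psi φ δ q) x ∧
      deriv (psi φ δ q) x ≤ max (2 * δ ^ (μ - 1)) ((15 / 8) * (h - δ ^ μ) / (h - δ)) ∧
      |deriv (deriv (psi φ δ q)) x| ≤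
        max (2 * Real.pi * δ ^ (μ - 2)) ((10 / Real.sqrt 3) * (h - δ ^ μ) / (h - δ) ^ 2) := by
  have hN2 : (2:ℝ) ≤ (N:ℝ) := by exact_mod_cast hN
  have hδh : δ < h := by rw [hh]; nlinarith
  have hne : h - δ ≠ 0 := by linarith
  have match1 : ∀ j : ℤ, fA' h δ μ j ((j:ℝ)*h) = fB' h δ μ (j-1) ((j:ℝ)*h) := fun j => by
    rw [fA'_left, fB'_left μ hne]
  have match2 : ∀ j : ℤ, fA' h δ μ j ((j:ℝ)*h + δ) = fB' h δ μ j ((j:ℝ)*h + δ) := fun j => by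
    rw [fA'_right h μ hδ.ne', fB'_right]
  have match1' : ∀ j : ℤ, fA'' h δ μ j ((j:ℝ)*h) = fB'' h δ μ (j-1) ((j:ℝ)*h) := fun j => by
    rw [fA''_left, fB''_left μ hne]
  have match2' : ∀ j : ℤ, fA'' h δ μ j ((j:ℝ)*h + δ) = fB'' h δ μ j ((j:ℝ)*h + δ) := fun j => by
    rw [fA''_right h μ hδ.ne', fB''_right]
  have hD1 : ∀ t, HasDerivAt φ (pwD h δ (fA' h δ μ) (fB' h δ μ) t) t := fun t =>
    pw_hasDerivAt hδ hδh φ (fA h δ μ) (fB h δ μ) (fA' h δ μ) (fB' h δ μ)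
      (fA_deriv hδ) (fB_deriv hδh) hφS hφP match1 match2 t
  have hD2 : ∀ t, HasDerivAt (pwD h δ (fA' h δ μ) (fB' h δ μ))
      (pwD h δ (fA'' h δ μ) (fB'' h δ μ) t) t := fun t =>
    pw_hasDerivAt hδ hδh _ (fA' h δ μ) (fB' h δ μ) (fA'' h δ μ) (fB'' h δ μ)
      (fA'_deriv hδ) (fB'_deriv hδh)
      (fun j t ht => pwD_eqA hδ hδh _ _ j t ht)
      (fun j t ht => pwD_eqB hδ hδh _ _ match1 match2 j t ht)
      match1' match2' t
  intro q _ _ x _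
  set c : ℝ := (1 - (q:ℝ)) * δ with hc
  have hpsi1 : ∀ y : ℝ, HasDerivAt (psi φ δ q) (pwD h δ (fA' h δ μ) (fB' h δ μ) (y + c)) y := by
    intro y
    have h1 := (hD1 (y + c)).comp y ((hasDerivAt_id y).add_const c)
    have h2 := h1.sub_const (φ c)
    show HasDerivAt (fun x => φ (x + c) - φ c) _ y
    simpa [Function.comp] using h2
  have hderiv1 : deriv (psi φ δ q) = fun y => pwD h δ (fA' h δ μ) (fB' h δ μ) (y + c) :=
    funext fun y => (hpsi1 y).deriv
  refine ⟨?_, ?_, ?_⟩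
  · rw [hderiv1]; exact (pwD1_bounds hδ hδh hle (x + c)).1
  · rw [hderiv1]; exact (pwD1_bounds hδ hδh hle (x + c)).2
  · rw [hderiv1]
    have h1 := (hD2 (x + c)).comp x ((hasDerivAt_id x).add_const c)
    have h2 : deriv (fun y => pwD h δ (fA' h δ μ) (fB' h δ μ) (y + c)) x
        = pwD h δ (fA'' h δ μ) (fB'' h δ μ) (x + c) := by
      have h3 := h1.deriv
      simp only [Function.comp_def, id, mul_one] at h3
      exact h3
    rw [h2]
    exact pwD2_bound hδ hδh hle (x + c)
end
end

section
/- Assume the positive reals λ₁,…,λ_d are rationally independent, i.e., whenever r₁,…,r_d are rational numbers with r₁λ₁ + ⋯ + r_dλ_d = 0, then all r_p = 0. Then for each fixed q ∈ {1,…,N} and any two interior multi-indices 𝐣, 𝐣′ ∈ {0,…,J−2}^d one has a_q^𝐣 − a_q^{𝐣′} = h · Σ_{p=1}^d λ_p (j_p − j′_p); in particular the map 𝐣 ↦ a_q^𝐣 is injective on {0,…,J−2}^d. -/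
noncomputable section

/-- The hypercube center coordinate `c_q^j`, with the boundary conventions
`c_q^{-1} = 0` and `c_q^{J-1} = 1`. -/
def center (h δ : ℝ) (J : ℕ) (q : ℕ) (j : ℤ) : ℝ :=
  if j = -1 then 0
  else if j = (J : ℤ) - 1 then 1
  else (j : ℝ) * h + (h + δ) / 2 + ((q : ℝ) - 1) * δ

/-- The mapped hypercube center `a_q^jv = Ψ_q(𝐜_q^jv) = Σ_p λ_p ψ_q(c_q^{j_p})`. -/
def amap (φ : ℝ → ℝ) (h δ : ℝ) (J : ℕ) {d : ℕ} (lam : Fin d → ℝ)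
    (q : ℕ) (jv : Fin d → ℤ) : ℝ :=
  ∑ p, lam p * psi φ δ q (center h δ J q (jv p))

/-! On the interior cells the argument `c_q^j + (1 - q)δ` of `φ` is the midpoint
`jh + (h + δ)/2` of the plateau `[jh + δ, (j+1)h]`, where the quintic takes the value
`P(1/2) = 1/2`; hence `ψ_q(c_q^j) = jh + const`, and `a_q` is affine in the multi-index
with linear part `h · Σ λ_p j_p`. Rational independence of the `λ_p` gives injectivity. -/

theorem Pfun_one_half : Pfun (1 / 2) = 1 / 2 := by
  norm_num [Pfun]

theorem center_of_interior {h δ : ℝ} {J q : ℕ} {j : ℤ} (hj0 : 0 ≤ j) (hj : j ≤ (J : ℤ) - 2) :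
    center h δ J q j = (j : ℝ) * h + (h + δ) / 2 + ((q : ℝ) - 1) * δ := by
  rw [center, if_neg (by omega), if_neg (by omega)]

def QuinticOnPlateaus (φ : ℝ → ℝ) (h δ a : ℝ) : Prop :=
  ∀ j : ℤ, ∀ t ∈ Set.Icc ((j : ℝ) * h + δ) (((j : ℝ) + 1) * h),
    φ t = (j : ℝ) * h + a + (h - a) * Pfun ((t - (j : ℝ) * h - δ) / (h - δ))

theorem apply_plateau_midpoint {φ : ℝ → ℝ} {h δ a : ℝ} (hδh : δ < h)
    (hφP : QuinticOnPlateaus φ h δ a)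
    (j : ℤ) : φ ((j : ℝ) * h + (h + δ) / 2) = (j : ℝ) * h + (a + h) / 2 := by
  have hmem : (j : ℝ) * h + (h + δ) / 2 ∈ Set.Icc ((j : ℝ) * h + δ) (((j : ℝ) + 1) * h) :=
    ⟨by linarith, by linarith⟩
  have harg : ((j : ℝ) * h + (h + δ) / 2 - (j : ℝ) * h - δ) / (h - δ) = 1 / 2 := by
    field_simp [(sub_pos.mpr hδh).ne']
    ring
  rw [hφP j _ hmem, harg, Pfun_one_half]
  ring

theorem psi_center_of_interior {φ : ℝ → ℝ} {h δ a : ℝ} {J q : ℕ} (hδh : δ < h)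
    (hφP : QuinticOnPlateaus φ h δ a)
    {j : ℤ} (hj0 : 0 ≤ j) (hj : j ≤ (J : ℤ) - 2) :
    psi φ δ q (center h δ J q j) = (j : ℝ) * h + (a + h) / 2 - φ ((1 - (q : ℝ)) * δ) := by
  have harg : center h δ J q j + (1 - (q : ℝ)) * δ = (j : ℝ) * h + (h + δ) / 2 := by
    rw [center_of_interior hj0 hj]
    ring
  rw [psi, harg, apply_plateau_midpoint hδh hφP]

theorem amap_sub_of_interior {φ : ℝ → ℝ} {h δ a : ℝ} {J q d : ℕ} (hδh : δ < h)
    (hφP : QuinticOnPlateaus φ h δ a)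
    (lam : Fin d → ℝ) {jv jv' : Fin d → ℤ}
    (hjv : ∀ p, 0 ≤ jv p ∧ jv p ≤ (J : ℤ) - 2) (hjv' : ∀ p, 0 ≤ jv' p ∧ jv' p ≤ (J : ℤ) - 2) :
    amap φ h δ J lam q jv - amap φ h δ J lam q jv' =
      h * ∑ p, lam p * ((jv p : ℝ) - (jv' p : ℝ)) := by
  rw [amap, amap, ← Finset.sum_sub_distrib, Finset.mul_sum]
  refine Finset.sum_congr rfl fun p _ => ?_
  rw [psi_center_of_interior hδh hφP (hjv p).1 (hjv p).2,
    psi_center_of_interior hδh hφP (hjv' p).1 (hjv' p).2]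
  ring

theorem eq_zero_of_sum_intCast_mul_eq_zero {ι : Type*} [Fintype ι] {lam : ι → ℝ}
    (hind : ∀ r : ι → ℚ, (∑ p, (r p : ℝ) * lam p) = 0 → ∀ p, r p = 0)
    {m : ι → ℤ} (hm : ∑ p, lam p * (m p : ℝ) = 0) : m = 0 := by
  have hr := hind (fun p => (m p : ℚ)) (by simpa only [Rat.cast_intCast, mul_comm] using hm)
  funext p
  exact_mod_cast hr p

theorem amap_interior_difference_general
    (N : ℕ) (hN : 2 ≤ N) (δ : ℝ) (hδ : 0 < δ) (μ : ℝ)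
    (h : ℝ) (hh : h = (N : ℝ) * δ)
    (φ : ℝ → ℝ)
    (hφP : ∀ j : ℤ, ∀ t ∈ Set.Icc ((j : ℝ) * h + δ) (((j : ℝ) + 1) * h),
      φ t = (j : ℝ) * h + δ ^ μ + (h - δ ^ μ) * Pfun ((t - (j : ℝ) * h - δ) / (h - δ)))
    (J : ℕ)
    (d : ℕ) (lam : Fin d → ℝ)
    (hind : ∀ r : Fin d → ℚ, (∑ p, (r p : ℝ) * lam p) = 0 → ∀ p, r p = 0)
    :
    ∀ q : ℕ, 1 ≤ q → q ≤ N →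
      ∀ jv jv' : Fin d → ℤ,
        (∀ p, 0 ≤ jv p ∧ jv p ≤ (J : ℤ) - 2) →
        (∀ p, 0 ≤ jv' p ∧ jv' p ≤ (J : ℤ) - 2) →
        amap φ h δ J lam q jv - amap φ h δ J lam q jv' =
          h * ∑ p, lam p * ((jv p : ℝ) - (jv' p : ℝ)) ∧
        (amap φ h δ J lam q jv = amap φ h δ J lam q jv' → jv = jv') := by
  intro q _ _ jv jv' hjv hjv'
  have hδh : δ < h := by
    have : (2 : ℝ) ≤ N := by exact_mod_cast hN
    rw [hh]
    nlinarith
  have hdiff := amap_sub_of_interior (q := q) hδh hφP lam hjv hjv'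
  refine ⟨hdiff, fun heq => ?_⟩
  have hsum : ∑ p, lam p * ((jv - jv') p : ℤ) = 0 := by
    rw [heq, sub_self, eq_comm, mul_eq_zero] at hdiff
    simpa only [Pi.sub_apply, Int.cast_sub] using hdiff.resolve_left (hδ.trans hδh).ne'
  exact sub_eq_zero.mp (eq_zero_of_sum_intCast_mul_eq_zero hind hsum)

/-- difference formula and injectivity for interior multi-indices. -/
theorem amap_interior_difference
    (N : ℕ) (hN : 2 ≤ N) (δ : ℝ) (hδ : 0 < δ) (μ : ℝ) (hμ : 0 < μ)
    (h : ℝ) (hh : h = (N : ℝ) * δ)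
    (φ : ℝ → ℝ)
    (hφS : ∀ j : ℤ, ∀ t ∈ Set.Icc ((j : ℝ) * h) ((j : ℝ) * h + δ),
      φ t = (j : ℝ) * h + δ ^ μ * Sfun ((t - (j : ℝ) * h) / δ))
    (hφP : ∀ j : ℤ, ∀ t ∈ Set.Icc ((j : ℝ) * h + δ) (((j : ℝ) + 1) * h),
      φ t = (j : ℝ) * h + δ ^ μ + (h - δ ^ μ) * Pfun ((t - (j : ℝ) * h - δ) / (h - δ)))
    (J : ℕ) (hJ : 0 < J) (hJh : (J : ℝ) * h = 1)
    (d : ℕ) (hd : 2 ≤ d) (lam : Fin d → ℝ) (hlam : ∀ p, 0 < lam p)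
    (hind : ∀ r : Fin d → ℚ, (∑ p, (r p : ℝ) * lam p) = 0 → ∀ p, r p = 0)
    :
    ∀ q : ℕ, 1 ≤ q → q ≤ N →
      ∀ jv jv' : Fin d → ℤ,
        (∀ p, 0 ≤ jv p ∧ jv p ≤ (J : ℤ) - 2) →
        (∀ p, 0 ≤ jv' p ∧ jv' p ≤ (J : ℤ) - 2) →
        amap φ h δ J lam q jv - amap φ h δ J lam q jv' =
          h * ∑ p, lam p * ((jv p : ℝ) - (jv' p : ℝ)) ∧
        (amap φ h δ J lam q jv = amap φ h δ J lam q jv' → jv = jv') :=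
  amap_interior_difference_general N hN δ hδ μ h hh φ hφP J d lam hind
end
end

section
/- Assume λ_p > 0 for all p and h ≥ δ^μ. Fix q ∈ {1,…,N}, a coordinate index p ∈ {1,…,d}, and indices j_l ∈ {−1,…,J−1} for all l ≠ p. Then the sequence k ↦ a_q^{(j₁,…,j_{p−1},k,j_{p+1},…,j_d)}, for k = −1, 0, …, J−1, is strictly increasing, and consecutive terms satisfy a_q^{(…,k+1,…)} − a_q^{(…,k,…)} ≥ λ_p · min{ h, (h + δ^μ)/2 }. -/
noncomputable section

set_option maxHeartbeats 2000000 in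
/-- along each coordinate row, the mapped centers are strictly increasing with quantified gaps. -/
theorem amap_row_strictMono
    (N : ℕ) (hN : 2 ≤ N) (δ : ℝ) (hδ : 0 < δ) (μ : ℝ) (hμ : 0 < μ)
    (h : ℝ) (hh : h = (N : ℝ) * δ)
    (φ : ℝ → ℝ)
    (hφS : ∀ j : ℤ, ∀ t ∈ Set.Icc ((j : ℝ) * h) ((j : ℝ) * h + δ),
      φ t = (j : ℝ) * h + δ ^ μ * Sfun ((t - (j : ℝ) * h) / δ))
    (hφP : ∀ j : ℤ, ∀ t ∈ Set.Icc ((j : ℝ) * h + δ) (((j : ℝ) + 1) * h),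
      φ t = (j : ℝ) * h + δ ^ μ + (h - δ ^ μ) * Pfun ((t - (j : ℝ) * h - δ) / (h - δ)))
    (J : ℕ) (hJ : 0 < J) (hJh : (J : ℝ) * h = 1)
    (d : ℕ) (hd : 2 ≤ d) (lam : Fin d → ℝ) (hlam : ∀ p, 0 < lam p)
    (hle : δ ^ μ ≤ h) :
    ∀ q : ℕ, 1 ≤ q → q ≤ N →
      ∀ p : Fin d, ∀ jv : Fin d → ℤ,
        (∀ l, l ≠ p → -1 ≤ jv l ∧ jv l ≤ (J : ℤ) - 1) →
        (∀ k k' : ℤ, -1 ≤ k → k < k' → k' ≤ (J : ℤ) - 1 →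
          amap φ h δ J lam q (Function.update jv p k) <
            amap φ h δ J lam q (Function.update jv p k')) ∧
        (∀ k : ℤ, -1 ≤ k → k + 1 ≤ (J : ℤ) - 1 →
          lam p * min h ((h + δ ^ μ) / 2) ≤
            amap φ h δ J lam q (Function.update jv p (k + 1)) -
              amap φ h δ J lam q (Function.update jv p k)) := by
  intro q hq1 hqN p jv hjv
  have hqR1 : (1:ℝ) ≤ q := by exact_mod_cast hq1
  have hqRN : (q:ℝ) ≤ N := by exact_mod_cast hqN
  have hNR : (2:ℝ) ≤ N := by exact_mod_cast hN
  have hδh : δ < h := by rw [hh]; nlinarith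
  have hh0 : 0 < h := lt_trans hδ hδh
  have hμ0 : 0 < δ ^ μ := Real.rpow_pos_of_pos hδ μ
  have hhd : (0:ℝ) < h - δ := by linarith
  set z : ℝ := (h - q * δ) / (h - δ) with hzdef
  have hz0 : 0 ≤ z := div_nonneg (by rw [hh]; nlinarith [mul_nonneg (sub_nonneg.mpr hqRN) hδ.le]) hhd.le
  have hz1 : z ≤ 1 := by
    rw [hzdef, div_le_one hhd]; nlinarith
  have hP0 : 0 ≤ Pfun z := by
    unfold Pfun
    nlinarith [pow_nonneg hz0 3, sq_nonneg (2*z - 5/2), sq_nonneg z]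
  have hP1 : Pfun z ≤ 1 := by
    have hid : 1 - Pfun z = (1-z)^3 * (6*z^2 + 3*z + 1) := by unfold Pfun; ring
    nlinarith [mul_nonneg (pow_nonneg (sub_nonneg.mpr hz1) 3)
      (by nlinarith [sq_nonneg z] : (0:ℝ) ≤ 6*z^2 + 3*z + 1)]
  -- evaluation of φ at the base point (1-q)δ
  have hmemA : (1 - (q:ℝ)) * δ ∈ Set.Icc ((((-1):ℤ):ℝ) * h + δ) (((((-1):ℤ):ℝ) + 1) * h) := by
    constructor
    · push_cast; rw [hh]; nlinarith
    · push_cast; nlinarith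
  have hA : φ ((1 - (q:ℝ)) * δ) = -h + δ ^ μ + (h - δ ^ μ) * Pfun z := by
    have ht := hφP (-1) _ hmemA
    have harg : ((1 - (q:ℝ)) * δ - (((-1):ℤ):ℝ) * h - δ) / (h - δ) = z := by
      rw [hzdef]; congr 1; push_cast; ring
    rw [ht, harg]; push_cast; ring
  set g : ℤ → ℝ := fun k => psi φ δ q (center h δ J q k) with hgdef
  have hg1 : g (-1) = 0 := by
    simp [hgdef, psi, center]
  have hg2 : ∀ k : ℤ, 0 ≤ k → k ≤ (J:ℤ) - 2 →
      g k = (k:ℝ) * h + (h + δ ^ μ) / 2 - φ ((1 - (q:ℝ)) * δ) := by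
    intro k hk0 hk2
    have hne1 : k ≠ -1 := by omega
    have hne2 : k ≠ (J:ℤ) - 1 := by omega
    have hc : center h δ J q k = (k:ℝ) * h + (h + δ) / 2 + ((q:ℝ) - 1) * δ := by
      simp [center, hne1, hne2]
    have harg : center h δ J q k + (1 - (q:ℝ)) * δ = (k:ℝ) * h + (h + δ) / 2 := by
      rw [hc]; ring
    have hmem : (k:ℝ) * h + (h + δ) / 2 ∈ Set.Icc ((k:ℝ) * h + δ) (((k:ℝ) + 1) * h) := by
      constructor
      · linarith
      · linarith
    have hφt := hφP k _ hmem
    have harg2 : ((k:ℝ) * h + (h + δ) / 2 - (k:ℝ) * h - δ) / (h - δ) = 1/2 := by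
      rw [div_eq_iff (ne_of_gt hhd)]; ring
    rw [harg2] at hφt
    have hPhalf : Pfun (1/2) = 1/2 := by unfold Pfun; norm_num
    rw [hPhalf] at hφt
    simp only [hgdef, psi]
    rw [harg, hφt]; ring
  have hg3 : g ((J:ℤ) - 1) = 1 := by
    have hne1 : ((J:ℤ) - 1) ≠ -1 := by omega
    have hc : center h δ J q ((J:ℤ) - 1) = 1 := by simp [center, hne1]
    have hmem : (1:ℝ) + (1 - (q:ℝ)) * δ ∈
        Set.Icc (((((J:ℤ) - 1):ℤ):ℝ) * h + δ) ((((((J:ℤ) - 1):ℤ):ℝ) + 1) * h) := by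
      constructor
      · push_cast
        linarith [hJh, hh, mul_nonneg (sub_nonneg.mpr hqRN) hδ.le]
      · push_cast
        linarith [hJh, mul_nonneg (sub_nonneg.mpr hqR1) hδ.le]
    have hφt := hφP ((J:ℤ) - 1) _ hmem
    have harg : ((1:ℝ) + (1 - (q:ℝ)) * δ - (((J:ℤ) - 1 : ℤ):ℝ) * h - δ) / (h - δ) = z := by
      rw [hzdef]; congr 1; push_cast; linarith [hJh]
    rw [harg] at hφt
    simp only [hgdef, psi]
    rw [hc, hφt, hA]
    push_cast
    linarith [hJh]
  have hdiff : ∀ k k' : ℤ,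
      amap φ h δ J lam q (Function.update jv p k') -
        amap φ h δ J lam q (Function.update jv p k) = lam p * (g k' - g k) := by
    intro k k'
    unfold amap
    rw [← Finset.sum_sub_distrib]
    rw [Finset.sum_eq_single p]
    · simp only [Function.update_self, hgdef]; ring
    · intro l _ hl
      rw [Function.update_of_ne hl, Function.update_of_ne hl]; ring
    · intro hp; exact absurd (Finset.mem_univ p) hp
  have hminh : min h ((h + δ ^ μ) / 2) ≤ h := min_le_left _ _
  have hminm : min h ((h + δ ^ μ) / 2) ≤ (h + δ ^ μ) / 2 := min_le_right _ _
  have hminpos : 0 < min h ((h + δ ^ μ) / 2) := lt_min hh0 (by linarith)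
  have key : ∀ k : ℤ, -1 ≤ k → k + 1 ≤ (J:ℤ) - 1 →
      min h ((h + δ ^ μ) / 2) ≤ g (k + 1) - g k := by
    intro k hk hk1
    by_cases hkneg : k = -1
    · subst hkneg
      by_cases hend : (0:ℤ) = (J:ℤ) - 1
      · rw [show ((-1:ℤ)) + 1 = (0:ℤ) by ring, hend, hg3, hg1]
        have hJ1 : (J:ℝ) = 1 := by
          have : (J:ℤ) = 1 := by omega
          exact_mod_cast this
        rw [hJ1, one_mul] at hJh
        linarith
      · rw [show ((-1:ℤ)) + 1 = (0:ℤ) by ring, hg1, hg2 0 le_rfl (by omega), hA]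
        push_cast
        nlinarith [mul_nonneg (sub_nonneg.mpr hle) (sub_nonneg.mpr hP1)]
    · have hk0 : 0 ≤ k := by omega
      by_cases hend : k + 1 = (J:ℤ) - 1
      · rw [hend, hg3, hg2 k hk0 (by omega), hA]
        have hkc : (k:ℝ) = (J:ℝ) - 2 := by
          have : k = (J:ℤ) - 2 := by omega
          exact_mod_cast this
        rw [hkc]
        nlinarith [mul_nonneg (sub_nonneg.mpr hle) hP0, hJh]
      · rw [hg2 (k+1) (by omega) (by omega), hg2 k hk0 (by omega)]
        push_cast
        nlinarith
  refine ⟨?_, ?_⟩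
  · intro k k' hk hkk' hk'
    have hchain : ∀ m : ℤ, k + 1 ≤ m → m ≤ (J:ℤ) - 1 → g k < g m := by
      refine Int.le_induction (motive := fun m _ => m ≤ (J:ℤ) - 1 → g k < g m) ?_ ?_
      · intro hle; have := key k hk hle; linarith
      · intro n hn ih hle
        have h2 := key n (by omega) (by omega)
        have h3 := ih (by omega)
        linarith
    have hgk : g k < g k' := hchain k' (by omega) hk'
    have hd := hdiff k k'
    have hpos : 0 < lam p * (g k' - g k) := mul_pos (hlam p) (by linarith)
    linarith
  · intro k hk hk1
    have hkey := key k hk hk1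
    have hd := hdiff k (k + 1)
    have hmul : lam p * min h ((h + δ ^ μ) / 2) ≤ lam p * (g (k+1) - g k) :=
      mul_le_mul_of_nonneg_left hkey (hlam p).le
    linarith
end
end

section
/- For every t ∈ [0,1], the set of levels q ∈ {1,…,N} for which t does NOT belong to any of the closed sub-intervals I_q^j := [jh + qδ, (j+1)h + (q−1)δ] (j ranging over the integers) has cardinality at most 1. Equivalently, every t ∈ [0,1] is covered by the closed sub-intervals of at least N−1 of the N shifted coverings. -/
/-! The gap of level `q` in period `j` is the open interval `(k δ, (k + 1) δ)` with
`k = j N + (q - 1)`. A point lying in such a gap determines `k = ⌊t / δ⌋`, hence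
`q - 1 = k mod N`, so it can lie in a gap of at most one level. -/

open Set

theorem Set.Subsingleton.ncard_le_one {α : Type*} {s : Set α} (hs : s.Subsingleton) :
    s.ncard ≤ 1 :=
  have := hs.finite.to_subtype
  ncard_le_one_iff_subsingleton.mpr hs

theorem exists_mem_Ioo_of_forall_notMem_Icc {h a b t : ℝ} (hh : 0 < h) (hba : b ≤ a + h)
    (ht : ¬ ∃ j : ℤ, t ∈ Icc (j * h + b) ((j + 1) * h + a)) :
    ∃ j : ℤ, t ∈ Ioo (j * h + a) (j * h + b) := by
  set j := ⌊(t - a) / h⌋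
  have hj_le : j * h + a ≤ t := by
    have := (le_div_iff₀ hh).mp (Int.floor_le ((t - a) / h)); linarith
  have hlt_succ : t < (j + 1) * h + a := by
    have := (div_lt_iff₀ hh).mp (Int.lt_floor_add_one ((t - a) / h)); linarith
  -- the left end `j h + a` of the gap is the right end of the interval of period `j - 1`
  refine ⟨j, lt_of_le_of_ne hj_le fun hend => ht ⟨j - 1, ?_, ?_⟩, ?_⟩
  · push_cast; linarith
  · push_cast; linarith
  · by_contra! hb
    exact ht ⟨j, hb, hlt_succ.le⟩

theorem Int.floor_div_eq_of_mem_Ioo {δ t : ℝ} {k : ℤ} (hδ : 0 < δ)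
    (ht : t ∈ Ioo (k * δ) ((k + 1) * δ)) : ⌊t / δ⌋ = k := by
  rw [Int.floor_eq_iff, le_div_iff₀ hδ, div_lt_iff₀ hδ]
  exact ⟨ht.1.le, ht.2⟩

theorem sub_one_eq_floor_div_emod_of_forall_notMem_Icc {N q : ℕ} {δ t : ℝ} (hδ : 0 < δ)
    (hq : 1 ≤ q) (hqN : q ≤ N)
    (hmiss : ¬ ∃ j : ℤ, t ∈ Icc (j * (N * δ) + q * δ) ((j + 1) * (N * δ) + (q - 1) * δ)) :
    (q : ℤ) - 1 = ⌊t / δ⌋ % N := by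
  have hN : (1 : ℝ) ≤ N := by exact_mod_cast hq.trans hqN
  obtain ⟨j, hj⟩ := exists_mem_Ioo_of_forall_notMem_Icc (by positivity) (by nlinarith) hmiss
  have hcell : ⌊t / δ⌋ = (q - 1 : ℤ) + N * j := by
    apply Int.floor_div_eq_of_mem_Ioo hδ
    push_cast
    constructor <;> linarith [hj.1, hj.2]
  rw [hcell, Int.add_mul_emod_self_left, Int.emod_eq_of_lt] <;> omega

theorem covering_miss_at_most_one_general
    (N : ℕ) (δ : ℝ) (hδ : 0 < δ)
    (h : ℝ) (hh : h = (N : ℝ) * δ) :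
    ∀ t ∈ Set.Icc (0 : ℝ) 1,
      Set.ncard {q : ℕ | 1 ≤ q ∧ q ≤ N ∧
        ¬ ∃ j : ℤ, t ∈ Set.Icc ((j : ℝ) * h + (q : ℝ) * δ)
          (((j : ℝ) + 1) * h + ((q : ℝ) - 1) * δ)} ≤ 1 := by
  intro t _
  subst hh
  apply Set.Subsingleton.ncard_le_one
  rintro q₁ ⟨hq₁, hq₁N, hmiss₁⟩ q₂ ⟨hq₂, hq₂N, hmiss₂⟩
  have h₁ := sub_one_eq_floor_div_emod_of_forall_notMem_Icc hδ hq₁ hq₁N hmiss₁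
  have h₂ := sub_one_eq_floor_div_emod_of_forall_notMem_Icc hδ hq₂ hq₂N hmiss₂
  omega

/-- each t ∈ [0,1] misses the closed sub-intervals of at most one of the
N shifted coverings. -/
theorem covering_miss_at_most_one
    (N : ℕ) (hN : 2 ≤ N) (δ : ℝ) (hδ : 0 < δ)
    (h : ℝ) (hh : h = (N : ℝ) * δ)
    (J : ℕ) (hJ : 0 < J) (hJh : (J : ℝ) * h = 1) :
    ∀ t ∈ Set.Icc (0 : ℝ) 1,
      Set.ncard {q : ℕ | 1 ≤ q ∧ q ≤ N ∧
        ¬ ∃ j : ℤ, t ∈ Set.Icc ((j : ℝ) * h + (q : ℝ) * δ)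
          (((j : ℝ) + 1) * h + ((q : ℝ) - 1) * δ)} ≤ 1 :=
  covering_miss_at_most_one_general N δ hδ h hh
end

section
/- For every x ∈ [0,1]^d, the set of levels q ∈ {1,…,N} for which x does NOT belong to any hypercube 𝐂_q^𝐣 := I_q^{j₁} × ⋯ × I_q^{j_d} (with the j_p ranging over the integers) has cardinality at most d. Equivalently, every x ∈ [0,1]^d is covered by a hypercube 𝐂_q^𝐣 for at least N−d values of q. -/
/-!
Measured in units of `δ`, the level-`q` intervals are `[jN + q, jN + q + N - 1]`, so a real `y`
misses all of them only if `⌈y / δ⌉ ≡ q (mod N)`. Hence each coordinate of `x` is missed by at most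
one level in `{1, …, N}`, and a level missed by the hypercubes must be missed by some coordinate.
-/

open Set

/-- The levels `q ∈ {1, …, N}` at which `y` lies in no interval `I_q^j`, for `h = N δ`. -/
def missedLevels (N : ℕ) (δ y : ℝ) : Set ℕ :=
  {q | 1 ≤ q ∧ q ≤ N ∧
    ¬ ∃ j : ℤ, y ∈ Icc ((j : ℝ) * (N * δ) + q * δ) (((j : ℝ) + 1) * (N * δ) + ((q : ℝ) - 1) * δ)}

theorem modEq_ceil_of_not_mem_Icc {N q : ℕ} {δ y : ℝ} (hN : N ≠ 0) (hδ : 0 < δ)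
    (H : ¬ ∃ j : ℤ,
      y ∈ Icc ((j : ℝ) * (N * δ) + q * δ) (((j : ℝ) + 1) * (N * δ) + ((q : ℝ) - 1) * δ)) :
    (q : ℤ) ≡ ⌈y / δ⌉ [ZMOD N] := by
  by_contra hq
  set c := ⌈y / δ⌉
  obtain ⟨j, hjc_lo, hjc_hi⟩ : ∃ j : ℤ, j * N + q + 1 ≤ c ∧ c ≤ (j + 1) * N + q - 1 := by
    have hr_pos : 0 < (c - q) % N :=
      (Int.emod_nonneg _ (by omega)).lt_of_ne' fun h0 =>
        hq (Int.modEq_iff_dvd.mpr (Int.dvd_of_emod_eq_zero h0))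
    have hr_lt : (c - q) % N < N := Int.emod_lt_of_pos _ (by omega)
    have := Int.ediv_mul_add_emod (c - q) N
    exact ⟨(c - q) / N, by linarith, by linarith⟩
  have hc_lo : ((c : ℝ) - 1) * δ < y :=
    (lt_div_iff₀ hδ).mp (by linarith [Int.ceil_lt_add_one (y / δ)])
  have hc_hi : y ≤ c * δ := (div_le_iff₀ hδ).mp (Int.le_ceil _)
  have hlo : (j : ℝ) * N + q + 1 ≤ c := by exact_mod_cast hjc_lo
  have hhi : (c : ℝ) ≤ (j + 1) * N + q - 1 := by exact_mod_cast hjc_hi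
  refine H ⟨j, ?_, ?_⟩ <;> nlinarith

theorem missedLevels_subsingleton (N : ℕ) {δ : ℝ} (hδ : 0 < δ) (y : ℝ) :
    (missedLevels N δ y).Subsingleton := by
  rintro q ⟨hq1, hqN, hq⟩ q' ⟨hq1', hqN', hq'⟩
  have hmod : (q : ℤ) ≡ q' [ZMOD N] :=
    (modEq_ceil_of_not_mem_Icc (by omega) hδ hq).trans
      (modEq_ceil_of_not_mem_Icc (by omega) hδ hq').symm
  exact (Int.natCast_modEq_iff.mp hmod).eq_of_abs_lt (by rw [abs_lt]; omega)

theorem Set.ncard_le_card_of_subset_iUnion_subsingleton {ι α : Type*} [Fintype ι]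
    {s : ι → Set α} (hs : ∀ i, (s i).Subsingleton) {t : Set α} (ht : t ⊆ ⋃ i, s i) :
    t.ncard ≤ Fintype.card ι :=
  calc t.ncard ≤ (⋃ i, s i).ncard := ncard_le_ncard ht (finite_iUnion fun i => (hs i).finite)
    _ ≤ ∑ i, (s i).ncard := ncard_iUnion_le_of_fintype s
    _ ≤ ∑ _i : ι, 1 := Finset.sum_le_sum fun i _ => (ncard_le_one (hs i).finite).mpr (hs i)
    _ = Fintype.card ι := by simp

theorem hypercube_miss_at_most_d_general
    (d N : ℕ) (δ : ℝ) (hδ : 0 < δ)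
    (h : ℝ) (hh : h = (N : ℝ) * δ) :
    ∀ x : Fin d → ℝ, (∀ p, x p ∈ Set.Icc (0 : ℝ) 1) →
      Set.ncard {q : ℕ | 1 ≤ q ∧ q ≤ N ∧
        ¬ ∃ jv : Fin d → ℤ, ∀ p,
          x p ∈ Set.Icc ((jv p : ℝ) * h + (q : ℝ) * δ)
            (((jv p : ℝ) + 1) * h + ((q : ℝ) - 1) * δ)} ≤ d := by
  intro x _
  subst hh
  refine (ncard_le_card_of_subset_iUnion_subsingleton
    (fun p => missedLevels_subsingleton N hδ (x p)) ?_).trans_eq (Fintype.card_fin d)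
  rintro q ⟨hq1, hqN, hmiss⟩
  by_contra hcovered
  simp only [mem_iUnion, not_exists] at hcovered
  choose jv hjv using fun p => not_not.mp fun hp => hcovered p ⟨hq1, hqN, hp⟩
  exact hmiss ⟨jv, hjv⟩

/-- each x ∈ [0,1]^d misses the hypercubes of at most d of the N levels. -/
theorem hypercube_miss_at_most_d
    (d N : ℕ) (hd : 2 ≤ d) (hN : 2 ≤ N) (δ : ℝ) (hδ : 0 < δ)
    (h : ℝ) (hh : h = (N : ℝ) * δ)
    (J : ℕ) (hJ : 0 < J) (hJh : (J : ℝ) * h = 1) :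
    ∀ x : Fin d → ℝ, (∀ p, x p ∈ Set.Icc (0 : ℝ) 1) →
      Set.ncard {q : ℕ | 1 ≤ q ∧ q ≤ N ∧
        ¬ ∃ jv : Fin d → ℤ, ∀ p,
          x p ∈ Set.Icc ((jv p : ℝ) * h + (q : ℝ) * δ)
            (((jv p : ℝ) + 1) * h + ((q : ℝ) - 1) * δ)} ≤ d :=
  hypercube_miss_at_most_d_general d N δ hδ h hh
end
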